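/- arXiv:2511.18198 — 7 statements merged into one kernel-verified Lean document; each statement's English description precedes it below -/
import Mathlib

section
/- For every m ≥ 1 there exists a move sequence that cleanly computes m with space at most ⌈log₂(m+1)⌉ + 1; that is, the space lower bound ⌈log₂(m+1)⌉ + 1 is achieved for every m. -/
/-- A move sequence in the reversible pebble game modelling intermediate
uncomputation of iterated out-of-place squarings.  `conf t` is the
configuration (finite set of pebbled nodes) at time `t ≤ T`; at step
`t < T` exactly the node `move t` is toggled, subject to the legality
condition that either `move t = 0` or `move t ≥ 1` and its predecessor
is pebbled. -/
structure MoveSeq where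
  /-- total move count -/
  T : ℕ
  /-- configuration at each time step -/
  conf : ℕ → Finset ℕ
  /-- the node toggled at step `t` (relevant for `t < T`) -/
  move : ℕ → ℕ
  init : conf 0 = ∅
  legal : ∀ t < T, move t = 0 ∨ (1 ≤ move t ∧ move t - 1 ∈ conf t)
  step : ∀ t < T, conf (t + 1) =
    if move t ∈ conf t then (conf t).erase (move t) else insert (move t) (conf t)

/-- The space of a move sequence: the maximum number of pebbled nodes over
all visited configurations. -/
def MoveSeq.space (M : MoveSeq) : ℕ :=
  (Finset.range (M.T + 1)).sup fun t => (M.conf t).card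

/-- The number of squaring operations: the number of moves toggling a node `i ≥ 1`. -/
def MoveSeq.squarings (M : MoveSeq) : ℕ :=
  ((Finset.range M.T).filter fun t => 1 ≤ M.move t).card

/-- The sequence cleanly computes `m` if its final configuration is `{m}`. -/
def MoveSeq.CleanlyComputes (M : MoveSeq) (m : ℕ) : Prop :=
  M.conf M.T = {m}

/-- Some configuration visited by the sequence contains the node `i`. -/
def MoveSeq.Visits (M : MoveSeq) (i : ℕ) : Prop :=
  ∃ t ≤ M.T, i ∈ M.conf t

namespace PebbleAux

/-- Toggle node `i` in configuration `S`. -/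
def applyMove (S : Finset ℕ) (i : ℕ) : Finset ℕ :=
  if i ∈ S then S.erase i else insert i S

/-- Run a list of moves. -/
def run (S : Finset ℕ) : List ℕ → Finset ℕ
  | [] => S
  | i :: l => run (applyMove S i) l

/-- Legality of a list of moves starting from `S`. -/
def Legal : Finset ℕ → List ℕ → Prop
  | _, [] => True
  | S, i :: l => (i = 0 ∨ (1 ≤ i ∧ i - 1 ∈ S)) ∧ Legal (applyMove S i) l

/-- Max cardinality of configurations visited while running `l` from `S`. -/
def maxCard (S : Finset ℕ) : List ℕ → ℕ
  | [] => S.card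
  | i :: l => max S.card (maxCard (applyMove S i) l)

lemma applyMove_applyMove (S : Finset ℕ) (i : ℕ) : applyMove (applyMove S i) i = S := by
  by_cases h : i ∈ S
  · simp [applyMove, h, Finset.insert_erase h]
  · simp [applyMove, h, Finset.erase_insert h]

lemma run_append (S : Finset ℕ) (l1 l2 : List ℕ) :
    run S (l1 ++ l2) = run (run S l1) l2 := by
  induction l1 generalizing S with
  | nil => rfl
  | cons a l ih => simp [run, ih]

lemma run_reverse (S : Finset ℕ) (l : List ℕ) : run (run S l) l.reverse = S := by
  induction l generalizing S with
  | nil => rfl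
  | cons a l ih =>
    simp only [run, List.reverse_cons, run_append, ih]
    simp [run, applyMove_applyMove]

lemma legal_append (S : Finset ℕ) (l1 l2 : List ℕ) :
    Legal S (l1 ++ l2) ↔ Legal S l1 ∧ Legal (run S l1) l2 := by
  induction l1 generalizing S with
  | nil => simp [Legal, run]
  | cons a l ih => simp [Legal, run, ih, and_assoc]

lemma mem_applyMove_of_ne {S : Finset ℕ} {x i : ℕ} (h : x ≠ i) (hx : x ∈ S) :
    x ∈ applyMove S i := by
  unfold applyMove
  split <;> simp [h, hx]

lemma legal_reverse (S : Finset ℕ) (l : List ℕ) (h : Legal S l) :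
    Legal (run S l) l.reverse := by
  induction l generalizing S with
  | nil => trivial
  | cons a l ih =>
    obtain ⟨ha, hl⟩ := h
    simp only [run, List.reverse_cons, legal_append]
    refine ⟨ih _ hl, ?_⟩
    rw [run_reverse]
    refine ⟨?_, trivial⟩
    rcases ha with h0 | ⟨h1, hmem⟩
    · exact Or.inl h0
    · exact Or.inr ⟨h1, mem_applyMove_of_ne (by omega) hmem⟩

lemma applyMove_insert {S : Finset ℕ} {x i : ℕ} (h : i ≠ x) :
    applyMove (insert x S) i = insert x (applyMove S i) := by
  unfold applyMove
  by_cases hi : i ∈ S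
  · rw [if_pos (Finset.mem_insert_of_mem hi), if_pos hi,
      Finset.erase_insert_of_ne (Ne.symm h)]
  · rw [if_neg (by simp [h, hi]), if_neg hi, Finset.insert_comm]

lemma run_insert {S : Finset ℕ} {x : ℕ} {l : List ℕ} (h : x ∉ l) :
    run (insert x S) l = insert x (run S l) := by
  induction l generalizing S with
  | nil => rfl
  | cons a l ih =>
    simp only [List.mem_cons, not_or] at h
    simp only [run, applyMove_insert (Ne.symm h.1)]
    exact ih h.2

lemma legal_insert {S : Finset ℕ} {x : ℕ} {l : List ℕ} (h : x ∉ l) (hl : Legal S l) :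
    Legal (insert x S) l := by
  induction l generalizing S with
  | nil => trivial
  | cons a l ih =>
    simp only [List.mem_cons, not_or] at h
    obtain ⟨ha, hl⟩ := hl
    refine ⟨?_, ?_⟩
    · rcases ha with h0 | ⟨h1, hmem⟩
      · exact Or.inl h0
      · exact Or.inr ⟨h1, Finset.mem_insert_of_mem hmem⟩
    · rw [applyMove_insert (Ne.symm h.1)]
      exact ih h.2 hl

lemma card_le_maxCard (S : Finset ℕ) (l : List ℕ) : S.card ≤ maxCard S l := by
  cases l with
  | nil => exact le_refl _
  | cons a l => exact le_max_left _ _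

lemma maxCard_append (S : Finset ℕ) (l1 l2 : List ℕ) :
    maxCard S (l1 ++ l2) = max (maxCard S l1) (maxCard (run S l1) l2) := by
  induction l1 generalizing S with
  | nil =>
    simp only [List.nil_append, maxCard, run]
    exact (max_eq_right (card_le_maxCard _ _)).symm
  | cons a l ih =>
    simp only [List.cons_append, maxCard, run, List.append_eq]
    rw [ih, max_assoc]

lemma maxCard_reverse (S : Finset ℕ) (l : List ℕ) :
    maxCard (run S l) l.reverse = maxCard S l := by
  induction l generalizing S with
  | nil => rfl
  | cons a l ih =>
    simp only [run, List.reverse_cons, maxCard_append, ih, run_reverse]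
    simp only [maxCard, applyMove_applyMove]
    have h1 : (applyMove S a).card ≤ maxCard (applyMove S a) l := card_le_maxCard _ _
    omega

lemma maxCard_insert {S : Finset ℕ} {x : ℕ} {l : List ℕ} (h : x ∉ l) :
    maxCard (insert x S) l ≤ maxCard S l + 1 := by
  induction l generalizing S with
  | nil => exact Finset.card_insert_le _ _
  | cons a l ih =>
    simp only [List.mem_cons, not_or] at h
    simp only [maxCard, applyMove_insert (Ne.symm h.1)]
    have h1 := Finset.card_insert_le x S
    have h2 := ih (S := applyMove S a) h.2
    omega

/-- The recursive strategy: cleanly pebble node `b + n - 1` using nodes in `[b, b+n)`. -/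
def strat (b n : ℕ) : List ℕ :=
  if n ≤ 1 then [b]
  else strat b ((n + 1) / 2) ++ strat (b + (n + 1) / 2) (n - (n + 1) / 2)
      ++ (strat b ((n + 1) / 2)).reverse
  termination_by n
  decreasing_by all_goals omega

lemma strat_mem : ∀ n, 1 ≤ n → ∀ b i, i ∈ strat b n → b ≤ i ∧ i < b + n := by
  intro n
  induction n using Nat.strong_induction_on with
  | _ n ih =>
    intro hn b i hi
    rw [strat] at hi
    split at hi
    · simp only [List.mem_singleton] at hi; omega
    · rename_i hngt
      simp only [List.mem_append, List.mem_reverse] at hi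
      rcases hi with (h | h) | h
      · have := ih ((n + 1) / 2) (by omega) (by omega) b i h; omega
      · have := ih (n - (n + 1) / 2) (by omega) (by omega) (b + (n + 1) / 2) i h; omega
      · have := ih ((n + 1) / 2) (by omega) (by omega) b i h; omega

lemma strat_spec : ∀ n, 1 ≤ n → ∀ b S, (b = 0 ∨ (1 ≤ b ∧ b - 1 ∈ S)) →
    (∀ i ∈ S, i < b ∨ b + n ≤ i) →
    run S (strat b n) = insert (b + n - 1) S ∧ Legal S (strat b n) ∧
      maxCard S (strat b n) ≤ S.card + Nat.clog 2 n + 1 := by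
  intro n
  induction n using Nat.strong_induction_on with
  | _ n ih =>
    intro hn b S hbase hfresh
    by_cases hn1 : n ≤ 1
    · -- n = 1
      have hn' : n = 1 := by omega
      subst hn'
      have hb : b ∉ S := by
        intro h; rcases hfresh b h with h' | h' <;> omega
      rw [strat]
      simp only [le_refl, if_pos]
      refine ⟨?_, ⟨hbase, trivial⟩, ?_⟩
      · simp [run, applyMove, hb]
      · simp only [maxCard, run, applyMove, if_neg hb, Nat.clog_one_right]
        have := Finset.card_insert_le b S
        omega
    · -- n ≥ 2
      push_neg at hn1
      set a := (n + 1) / 2 with ha_def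
      have ha1 : 1 ≤ a := by omega
      have han : a < n := by omega
      have hna1 : 1 ≤ n - a := by omega
      have hnaa : n - a ≤ a := by omega
      have hclog : Nat.clog 2 n = Nat.clog 2 a + 1 := by
        rw [Nat.clog_of_two_le (by norm_num) (by omega)]
        have h : (n + 2 - 1) / 2 = a := by omega
        rw [h]
      have hclog2 : Nat.clog 2 (n - a) ≤ Nat.clog 2 a := Nat.clog_mono_right 2 hnaa
      -- phase 1
      obtain ⟨hrun1, hleg1, hmax1⟩ := ih a han ha1 b S hbase
        (fun i hi => by rcases hfresh i hi with h | h <;> omega)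
      -- phase 2
      have hfresh2 : ∀ i ∈ insert (b + a - 1) S, i < b + a ∨ (b + a) + (n - a) ≤ i := by
        intro i hi
        rcases Finset.mem_insert.mp hi with h | h
        · omega
        · rcases hfresh i h with h' | h' <;> omega
      obtain ⟨hrun2, hleg2, hmax2⟩ := ih (n - a) (by omega) hna1 (b + a)
        (insert (b + a - 1) S)
        (Or.inr ⟨by omega, by simp [Nat.add_sub_cancel]⟩) hfresh2
      have hkey : b + a + (n - a) - 1 = b + n - 1 := by omega
      rw [hkey] at hrun2
      have hnotmem : (b + n - 1) ∉ strat b a := by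
        intro h
        have := strat_mem a ha1 b _ h
        omega
      have hnotmemrev : (b + n - 1) ∉ (strat b a).reverse := by
        simpa using hnotmem
      have hba1 : b + a - 1 ∉ S := by
        intro h; rcases hfresh _ h with h' | h' <;> omega
      have hstrat : strat b n
          = strat b a ++ strat (b + a) (n - a) ++ (strat b a).reverse := by
        rw [strat]; simp only [if_neg (by omega : ¬ n ≤ 1)]; rfl
      rw [hstrat]
      -- abbreviations
      have hrunrev : run (insert (b + n - 1) (insert (b + a - 1) S)) (strat b a).reverse
          = insert (b + n - 1) S := by
        rw [run_insert hnotmemrev, ← hrun1, run_reverse]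
      refine ⟨?_, ?_, ?_⟩
      · rw [run_append, run_append, hrun1, hrun2, hrunrev]
      · rw [legal_append, legal_append, run_append, hrun1, hrun2]
        refine ⟨⟨hleg1, hleg2⟩, ?_⟩
        have : Legal (insert (b + a - 1) S) (strat b a).reverse := by
          rw [← hrun1]; exact legal_reverse _ _ hleg1
        exact legal_insert hnotmemrev this
      · rw [maxCard_append, maxCard_append, run_append, hrun1, hrun2]
        have hc1 : (insert (b + a - 1) S).card ≤ S.card + 1 := Finset.card_insert_le _ _
        have hrev : maxCard (insert (b + n - 1) (insert (b + a - 1) S)) (strat b a).reverse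
            ≤ maxCard S (strat b a) + 1 := by
          have h1 := maxCard_insert (S := insert (b + a - 1) S) hnotmemrev
          have h2 : maxCard (insert (b + a - 1) S) (strat b a).reverse
              = maxCard S (strat b a) := by
            rw [← hrun1, maxCard_reverse]
          omega
        omega

/-- Build a `MoveSeq` from a legal list of moves. -/
def ofList (l : List ℕ) (hl : Legal ∅ l) : MoveSeq where
  T := l.length
  conf t := run ∅ (l.take t)
  move t := l.getD t 0
  init := rfl
  legal := by
    have key : ∀ (l : List ℕ) (S : Finset ℕ), Legal S l → ∀ t < l.length,
        l.getD t 0 = 0 ∨ (1 ≤ l.getD t 0 ∧ l.getD t 0 - 1 ∈ run S (l.take t)) := by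
      intro l
      induction l with
      | nil => intro S _ t ht; simp at ht
      | cons a l ih =>
        intro S hl t ht
        obtain ⟨ha, hl'⟩ := hl
        cases t with
        | zero => simpa [run] using ha
        | succ t =>
          have := ih (applyMove S a) hl' t (by simpa using ht)
          simpa [run] using this
    exact key l ∅ hl
  step := by
    intro t ht
    have h1 : l.take (t + 1) = l.take t ++ [l.getD t 0] := by
      rw [List.take_succ]
      congr 1
      rw [List.getElem?_eq_getElem ht]
      simp [List.getD_eq_getElem?_getD, List.getElem?_eq_getElem ht]
    simp only [h1, run_append, run]
    rfl

lemma card_run_take_le (S : Finset ℕ) (l : List ℕ) (t : ℕ) :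
    (run S (l.take t)).card ≤ maxCard S l := by
  induction l generalizing S t with
  | nil => simp [run, maxCard]
  | cons a l ih =>
    cases t with
    | zero => exact le_max_left _ _
    | succ t =>
      simp only [List.take_succ_cons, run, maxCard]
      exact le_max_of_le_right (ih _ _)

end PebbleAux

/-- the space lower bound `⌈log₂(m+1)⌉ + 1` is achieved for every `m ≥ 1`. -/
theorem space_lower_bound_achieved (m : ℕ) (hm : 1 ≤ m) :
    ∃ M : MoveSeq, M.CleanlyComputes m ∧ M.space ≤ Nat.clog 2 (m + 1) + 1 := by
  obtain ⟨hrun, hleg, hmax⟩ := PebbleAux.strat_spec (m + 1) (by omega) 0 ∅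
    (Or.inl rfl) (by simp)
  refine ⟨PebbleAux.ofList _ hleg, ?_, ?_⟩
  · show PebbleAux.run ∅ ((PebbleAux.strat 0 (m + 1)).take
        (PebbleAux.strat 0 (m + 1)).length) = {m}
    rw [List.take_length, hrun]
    simp
  · show (Finset.range _).sup _ ≤ _
    apply Finset.sup_le
    intro t _
    calc (PebbleAux.run ∅ (List.take t _)).card
        ≤ PebbleAux.maxCard ∅ (PebbleAux.strat 0 (m + 1)) :=
          PebbleAux.card_run_take_le _ _ _
      _ ≤ Nat.clog 2 (m + 1) + 1 := by simpa using hmax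
end

section
/- If there exists a move sequence that cleanly computes m with space at most r and total move count t, then there exists a move sequence that cleanly computes 2m + 1 with space at most r + 1 and total move count at most 3t. -/
namespace PebbleAux

/-- Toggle a node. -/
def stepC (S : Finset ℕ) (x : ℕ) : Finset ℕ := if x ∈ S then S.erase x else insert x S

/-- Run a list of moves. -/
def runC : Finset ℕ → List ℕ → Finset ℕ
  | S, [] => S
  | S, x :: L => runC (stepC S x) L

/-- Legality of a list of moves from a configuration. -/
def LegalFrom : Finset ℕ → List ℕ → Prop
  | _, [] => True
  | S, x :: L => (x = 0 ∨ (1 ≤ x ∧ x - 1 ∈ S)) ∧ LegalFrom (stepC S x) L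

/-- Max card over visited configurations. -/
def spaceC : Finset ℕ → List ℕ → ℕ
  | S, [] => S.card
  | S, x :: L => max S.card (spaceC (stepC S x) L)

@[simp] lemma runC_nil (S : Finset ℕ) : runC S [] = S := rfl
@[simp] lemma runC_cons (S : Finset ℕ) (x : ℕ) (L : List ℕ) :
    runC S (x :: L) = runC (stepC S x) L := rfl
@[simp] lemma spaceC_nil (S : Finset ℕ) : spaceC S [] = S.card := rfl
@[simp] lemma spaceC_cons (S : Finset ℕ) (x : ℕ) (L : List ℕ) :
    spaceC S (x :: L) = max S.card (spaceC (stepC S x) L) := rfl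
@[simp] lemma legalFrom_nil (S : Finset ℕ) : LegalFrom S [] := trivial
lemma legalFrom_cons {S : Finset ℕ} {x : ℕ} {L : List ℕ} :
    LegalFrom S (x :: L) ↔ (x = 0 ∨ (1 ≤ x ∧ x - 1 ∈ S)) ∧ LegalFrom (stepC S x) L :=
  Iff.rfl

lemma runC_append (S : Finset ℕ) (A B : List ℕ) :
    runC S (A ++ B) = runC (runC S A) B := by
  induction A generalizing S with
  | nil => rfl
  | cons x A ih => simp [runC, ih]

lemma legalFrom_append {S : Finset ℕ} {A B : List ℕ}
    (hA : LegalFrom S A) (hB : LegalFrom (runC S A) B) : LegalFrom S (A ++ B) := by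
  induction A generalizing S with
  | nil => simpa using hB
  | cons x A ih =>
      exact ⟨hA.1, ih hA.2 (by simpa using hB)⟩

lemma card_le_spaceC (S : Finset ℕ) (L : List ℕ) : S.card ≤ spaceC S L := by
  cases L <;> simp

lemma spaceC_append_le (S : Finset ℕ) (A B : List ℕ) :
    spaceC S (A ++ B) ≤ max (spaceC S A) (spaceC (runC S A) B) := by
  induction A generalizing S with
  | nil => simp
  | cons x A ih =>
      simp only [List.cons_append, spaceC_cons, runC_cons]
      refine max_le ?_ ?_
      · exact le_max_of_le_left (le_max_left _ _)
      · exact (ih (stepC S x)).trans (by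
          rw [max_assoc]; exact le_max_right _ _)

lemma stepC_stepC (S : Finset ℕ) (x : ℕ) : stepC (stepC S x) x = S := by
  by_cases h : x ∈ S
  · simp [stepC, h, Finset.insert_erase]
  · simp [stepC, h, Finset.erase_insert]

/-- Key reverse lemma. -/
lemma reverse_lemma {S : Finset ℕ} {L : List ℕ} (h : LegalFrom S L) :
    LegalFrom (runC S L) L.reverse ∧ runC (runC S L) L.reverse = S ∧
      spaceC (runC S L) L.reverse ≤ spaceC S L := by
  induction L generalizing S with
  | nil => simp
  | cons x L ih =>
      obtain ⟨hx, hL⟩ := h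
      obtain ⟨ih1, ih2, ih3⟩ := ih hL
      have hx' : x = 0 ∨ (1 ≤ x ∧ x - 1 ∈ stepC S x) := by
        rcases hx with h0 | ⟨h1, h2⟩
        · exact Or.inl h0
        · refine Or.inr ⟨h1, ?_⟩
          have hne : x - 1 ≠ x := by omega
          by_cases hmem : x ∈ S
          · simp [stepC, hmem, Finset.mem_erase, hne, h2]
          · simp [stepC, hmem, Finset.mem_insert, h2]
      refine ⟨?_, ?_, ?_⟩
      · simp only [List.reverse_cons, runC_cons]
        refine legalFrom_append ih1 ?_
        rw [ih2]
        exact ⟨hx', trivial⟩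
      · simp only [List.reverse_cons, runC_cons, runC_append, ih2]
        simp [runC, stepC_stepC]
      · simp only [List.reverse_cons, runC_cons]
        refine (spaceC_append_le _ _ _).trans ?_
        rw [ih2]
        simp only [spaceC_cons, spaceC_nil, stepC_stepC, spaceC]
        exact max_le (le_max_of_le_right ih3)
          (max_le (le_max_of_le_right (card_le_spaceC _ L)) (le_max_left _ _))

/-- Shift lemma: run a shifted copy with a spectator pebble at `m`. -/
lemma shift_lemma (m : ℕ) {S : Finset ℕ} {L : List ℕ} (h : LegalFrom S L) :
    LegalFrom (S.image (· + (m + 1)) ∪ {m}) (L.map (· + (m + 1))) ∧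
      runC (S.image (· + (m + 1)) ∪ {m}) (L.map (· + (m + 1)))
        = (runC S L).image (· + (m + 1)) ∪ {m} ∧
      spaceC (S.image (· + (m + 1)) ∪ {m}) (L.map (· + (m + 1))) ≤ spaceC S L + 1 := by
  have hinj : Function.Injective (· + (m + 1)) := fun a b hab => by simpa using hab
  have hcard : ∀ S : Finset ℕ, (S.image (· + (m + 1)) ∪ {m}).card = S.card + 1 := by
    intro S
    rw [Finset.card_union_of_disjoint, Finset.card_image_of_injective _ hinj,
      Finset.card_singleton]
    simp only [Finset.disjoint_singleton_right, Finset.mem_image]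
    rintro ⟨a, _, ha⟩; omega
  have hstep : ∀ (S : Finset ℕ) (x : ℕ),
      stepC (S.image (· + (m + 1)) ∪ {m}) (x + (m + 1))
        = (stepC S x).image (· + (m + 1)) ∪ {m} := by
    intro S x
    have hne : x + (m + 1) ∉ ({m} : Finset ℕ) := by simp; omega
    have hmem : x + (m + 1) ∈ S.image (· + (m + 1)) ∪ {m} ↔ x ∈ S := by
      simp only [Finset.mem_union, Finset.mem_image, Finset.mem_singleton]
      constructor
      · rintro (⟨a, ha, hax⟩ | hx)
        · have : a = x := by omega
          rwa [this] at ha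
        · omega
      · intro hx; exact Or.inl ⟨x, hx, rfl⟩
    by_cases hx : x ∈ S
    · rw [stepC, stepC, if_pos hx, if_pos (hmem.mpr hx), Finset.erase_union_distrib,
        Finset.erase_eq_of_notMem hne, ← Finset.image_erase hinj]
    · rw [stepC, stepC, if_neg hx, if_neg (fun hc => hx (hmem.mp hc)),
        Finset.image_insert, Finset.insert_union]
  induction L generalizing S with
  | nil => exact ⟨trivial, rfl, (hcard S).le⟩
  | cons x L ih =>
      obtain ⟨hx, hL⟩ := h
      obtain ⟨ih1, ih2, ih3⟩ := ih hL
      refine ⟨?_, ?_, ?_⟩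
      · simp only [List.map_cons, legalFrom_cons, hstep]
        refine ⟨?_, ih1⟩
        rcases hx with h0 | ⟨h1, h2⟩
        · subst h0
          refine Or.inr ⟨by omega, ?_⟩
          simp
        · refine Or.inr ⟨by omega, ?_⟩
          have hx1 : x + (m + 1) - 1 = (x - 1) + (m + 1) := by omega
          rw [hx1]
          exact Finset.mem_union_left _ (Finset.mem_image_of_mem _ h2)
      · simp only [List.map_cons, runC_cons, hstep]; exact ih2
      · simp only [List.map_cons, spaceC_cons, hstep, hcard]
        exact max_le (Nat.add_le_add_right (le_max_left _ _) 1)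
          (ih3.trans (Nat.add_le_add_right (le_max_right _ _) 1))

/-- Spectator lemma: a pebble on a large node `c` doesn't interfere. -/
lemma spectator_lemma (c : ℕ) {S : Finset ℕ} {L : List ℕ}
    (hL : ∀ x ∈ L, x < c) (h : LegalFrom S L) :
    LegalFrom (S ∪ {c}) L ∧ runC (S ∪ {c}) L = runC S L ∪ {c} ∧
      spaceC (S ∪ {c}) L ≤ spaceC S L + 1 := by
  induction L generalizing S with
  | nil =>
      refine ⟨trivial, rfl, ?_⟩
      simpa using Finset.card_union_le S {c}
  | cons x L ih =>
      obtain ⟨hx, hLeg⟩ := h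
      have hxc : x < c := hL x List.mem_cons_self
      have hxc' : x ≠ c := by omega
      have hne : x ∉ ({c} : Finset ℕ) := by simpa using hxc'
      have hstep : stepC (S ∪ {c}) x = stepC S x ∪ {c} := by
        by_cases hxS : x ∈ S
        · rw [stepC, stepC, if_pos hxS, if_pos (Finset.mem_union_left _ hxS),
            Finset.erase_union_distrib, Finset.erase_eq_of_notMem hne]
        · have hns : x ∉ S ∪ {c} := by simp [hxS, hxc']
          rw [stepC, stepC, if_neg hxS, if_neg hns, Finset.insert_union]
      obtain ⟨ih1, ih2, ih3⟩ := ih (fun y hy => hL y (List.mem_cons_of_mem x hy)) hLeg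
      refine ⟨⟨?_, by rw [hstep]; exact ih1⟩, by simp only [runC_cons, hstep]; exact ih2, ?_⟩
      · rcases hx with h0 | ⟨h1, h2⟩
        · exact Or.inl h0
        · exact Or.inr ⟨h1, Finset.mem_union_left _ h2⟩
      · simp only [spaceC_cons, hstep]
        refine max_le ?_ (ih3.trans (Nat.add_le_add_right (le_max_right _ _) 1))
        calc (S ∪ {c}).card ≤ S.card + 1 := by simpa using Finset.card_union_le S {c}
          _ ≤ max S.card (spaceC (stepC S x) L) + 1 := Nat.add_le_add_right (le_max_left _ _) 1

/-- Pruning lemma: discard all moves on nodes `> m`. -/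
lemma prune_lemma (m : ℕ) {S : Finset ℕ} {L : List ℕ} (h : LegalFrom S L) :
    LegalFrom (S.filter (· ≤ m)) (L.filter (· ≤ m)) ∧
      runC (S.filter (· ≤ m)) (L.filter (· ≤ m)) = (runC S L).filter (· ≤ m) ∧
      spaceC (S.filter (· ≤ m)) (L.filter (· ≤ m)) ≤ spaceC S L := by
  induction L generalizing S with
  | nil => exact ⟨trivial, rfl, Finset.card_filter_le _ _⟩
  | cons x L ih =>
      obtain ⟨hx, hL⟩ := h
      obtain ⟨ih1, ih2, ih3⟩ := ih hL
      by_cases hxm : x ≤ m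
      · have hfil : (x :: L).filter (fun y => decide (y ≤ m)) = x :: L.filter (fun y => decide (y ≤ m)) := by
          simp [List.filter_cons, hxm]
        have hstep : stepC (S.filter (· ≤ m)) x = (stepC S x).filter (· ≤ m) := by
          have hmem : x ∈ S.filter (· ≤ m) ↔ x ∈ S := by
            simp [Finset.mem_filter, hxm]
          by_cases hxS : x ∈ S
          · rw [stepC, stepC, if_pos hxS, if_pos (hmem.mpr hxS), Finset.filter_erase]
          · rw [stepC, stepC, if_neg hxS, if_neg (fun hc => hxS (hmem.mp hc)),
              Finset.filter_insert, if_pos hxm]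
        refine ⟨?_, ?_, ?_⟩
        · rw [hfil]
          refine ⟨?_, by rw [hstep]; exact ih1⟩
          rcases hx with h0 | ⟨h1, h2⟩
          · exact Or.inl h0
          · exact Or.inr ⟨h1, Finset.mem_filter.mpr ⟨h2, by simp; omega⟩⟩
        · rw [hfil]; simp only [runC_cons, hstep]; exact ih2
        · rw [hfil]; simp only [spaceC_cons, hstep]
          exact max_le (le_max_of_le_left (Finset.card_filter_le _ _)) (le_max_of_le_right ih3)
      · have hfil : (x :: L).filter (fun y => decide (y ≤ m)) = L.filter (fun y => decide (y ≤ m)) := by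
          simp [List.filter_cons, hxm]
        have hstep : (stepC S x).filter (· ≤ m) = S.filter (· ≤ m) := by
          by_cases hxS : x ∈ S
          · rw [stepC, if_pos hxS, Finset.filter_erase, Finset.erase_eq_of_notMem]
            simp [Finset.mem_filter]; omega
          · rw [stepC, if_neg hxS, Finset.filter_insert, if_neg (by simpa using hxm)]
        rw [hfil, ← hstep] at *
        exact ⟨ih1, ih2, ih3.trans (le_max_right _ _)⟩

/-! ### Converting a `MoveSeq` to a list and back -/

lemma moveSeq_stepC (M : MoveSeq) {u : ℕ} (hu : u < M.T) :
    M.conf (u + 1) = stepC (M.conf u) (M.move u) := M.step u hu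

lemma moveSeq_to_list (M : MoveSeq) :
    ∀ k u, u + k ≤ M.T →
      LegalFrom (M.conf u) ((List.range' u k).map M.move) ∧
      runC (M.conf u) ((List.range' u k).map M.move) = M.conf (u + k) ∧
      spaceC (M.conf u) ((List.range' u k).map M.move) ≤ M.space := by
  intro k
  induction k with
  | zero =>
      intro u hu
      refine ⟨trivial, rfl, ?_⟩
      simp only [List.range'_zero, List.map_nil, spaceC_nil]
      exact Finset.le_sup (f := fun t => (M.conf t).card) (Finset.mem_range.mpr (by omega))
  | succ k ih =>
      intro u hu
      have hu' : u < M.T := by omega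
      have hstep := (moveSeq_stepC M hu').symm
      have hr : List.range' u (k + 1) = u :: List.range' (u + 1) k := List.range'_succ
      obtain ⟨ih1, ih2, ih3⟩ := ih (u + 1) (by omega)
      rw [hr]
      simp only [List.map_cons, legalFrom_cons, runC_cons, spaceC_cons, hstep]
      refine ⟨⟨M.legal u hu', ih1⟩, by rw [ih2]; congr 1; omega, ?_⟩
      refine max_le ?_ ih3
      exact Finset.le_sup (f := fun t => (M.conf t).card) (Finset.mem_range.mpr (by omega))

lemma list_legal_getD {L : List ℕ} :
    ∀ {S : Finset ℕ}, LegalFrom S L → ∀ t < L.length,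
      L.getD t 0 = 0 ∨ (1 ≤ L.getD t 0 ∧ L.getD t 0 - 1 ∈ runC S (L.take t)) := by
  induction L with
  | nil => intro S _ t ht; simp at ht
  | cons x L ih =>
      intro S h t ht
      obtain ⟨hx, hL⟩ := h
      cases t with
      | zero => simpa using hx
      | succ t =>
          have := ih hL t (by simpa using ht)
          simpa using this

lemma list_step_getD {L : List ℕ} :
    ∀ {S : Finset ℕ}, ∀ t < L.length,
      runC S (L.take (t + 1)) = stepC (runC S (L.take t)) (L.getD t 0) := by
  induction L with
  | nil => intro S t ht; simp at ht
  | cons x L ih =>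
      intro S t ht
      cases t with
      | zero => simp [runC]
      | succ t =>
          have := ih (S := stepC S x) t (by simpa using ht)
          simpa using this

lemma list_card_take_le {L : List ℕ} :
    ∀ {S : Finset ℕ} (t : ℕ), (runC S (L.take t)).card ≤ spaceC S L := by
  induction L with
  | nil => intro S t; simp
  | cons x L ih =>
      intro S t
      cases t with
      | zero => simpa using card_le_spaceC S (x :: L)
      | succ t =>
          simp only [List.take_succ_cons, runC_cons, spaceC_cons]
          exact le_max_of_le_right (ih t)

/-- The `MoveSeq` associated to a list of moves. -/
def toMoveSeq (L : List ℕ) (h : LegalFrom ∅ L) : MoveSeq where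
  T := L.length
  conf := fun t => runC ∅ (L.take t)
  move := fun t => L.getD t 0
  init := by simp
  legal := fun t ht => list_legal_getD h t ht
  step := fun t ht => by
    show runC ∅ (L.take (t + 1)) = _
    rw [list_step_getD t ht]
    rfl

lemma toMoveSeq_space (L : List ℕ) (h : LegalFrom ∅ L) :
    (toMoveSeq L h).space ≤ spaceC ∅ L := by
  refine Finset.sup_le fun t _ => ?_
  exact list_card_take_le t

end PebbleAux

/-- binary-recursion step: from a clean computation of `m` with
space `≤ r` and move count `t`, obtain a clean computation of `2m + 1` with
space `≤ r + 1` and move count `≤ 3t`. -/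
theorem binary_recursion_step (m r t : ℕ) (M : MoveSeq)
    (hc : M.CleanlyComputes m) (hs : M.space ≤ r) (ht : M.T = t) :
    ∃ M' : MoveSeq, M'.CleanlyComputes (2 * m + 1) ∧
      M'.space ≤ r + 1 ∧ M'.T ≤ 3 * t := by
  classical
  set L : List ℕ := (List.range' 0 M.T).map M.move with hLdef
  obtain ⟨hleg, hrun, hspace⟩ := PebbleAux.moveSeq_to_list M M.T 0 (by omega)
  rw [M.init] at hleg hrun hspace
  rw [Nat.zero_add] at hrun
  rw [hc] at hrun
  -- prune
  obtain ⟨pleg, prun, pspace⟩ := PebbleAux.prune_lemma m hleg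
  rw [Finset.filter_empty] at pleg prun pspace
  set L' : List ℕ := L.filter (· ≤ m) with hL'def
  rw [hrun] at prun
  have hrun' : PebbleAux.runC ∅ L' = {m} := by
    rw [prun, Finset.filter_singleton, if_pos (by simp)]
  have hspace' : PebbleAux.spaceC ∅ L' ≤ r := pspace.trans (hspace.trans hs)
  have hlen' : L'.length ≤ M.T := by
    have := List.length_filter_le (fun y => decide (y ≤ m)) L
    simpa [hL'def] using this.trans (by simp [hLdef])
  have hbdd : ∀ x ∈ L', x ≤ m := fun x hx => by
    have := List.of_mem_filter hx
    simpa using this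
  -- phase 2: shifted copy
  obtain ⟨sleg, srun, sspace⟩ := PebbleAux.shift_lemma m pleg
  rw [Finset.image_empty, Finset.empty_union] at sleg srun sspace
  -- note: runC of pruned from ∅.filter = from ∅
  rw [hrun'] at srun
  -- phase 3: reverse with spectator 2m+1
  obtain ⟨rleg, rrun, rspace⟩ := PebbleAux.reverse_lemma pleg
  rw [hrun'] at rleg rrun rspace
  obtain ⟨cleg, crun, cspace⟩ := PebbleAux.spectator_lemma (2 * m + 1)
    (fun x hx => by have := hbdd x (List.mem_reverse.mp hx); omega) rleg
  -- assemble
  set Lfin : List ℕ := L' ++ (L'.map (· + (m + 1)) ++ L'.reverse) with hLfin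
  have hrunfin : PebbleAux.runC ∅ Lfin = {2 * m + 1} := by
    rw [hLfin, PebbleAux.runC_append, PebbleAux.runC_append, hrun', srun]
    have himg : ({m} : Finset ℕ).image (· + (m + 1)) ∪ {m} = {m} ∪ {2 * m + 1} := by
      rw [Finset.image_singleton]
      have : m + (m + 1) = 2 * m + 1 := by ring
      rw [this, Finset.union_comm]
    rw [himg, crun, rrun]
    simp
  have hlegfin : PebbleAux.LegalFrom ∅ Lfin := by
    refine PebbleAux.legalFrom_append pleg ?_
    rw [hrun']
    refine PebbleAux.legalFrom_append sleg ?_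
    rw [srun]
    have himg : ({m} : Finset ℕ).image (· + (m + 1)) ∪ {m} = {m} ∪ {2 * m + 1} := by
      rw [Finset.image_singleton]
      have : m + (m + 1) = 2 * m + 1 := by ring
      rw [this, Finset.union_comm]
    rw [himg]
    exact cleg
  have hspacefin : PebbleAux.spaceC ∅ Lfin ≤ r + 1 := by
    rw [hLfin]
    refine (PebbleAux.spaceC_append_le _ _ _).trans ?_
    refine max_le (hspace'.trans (by omega)) ?_
    rw [hrun']
    refine (PebbleAux.spaceC_append_le _ _ _).trans ?_
    refine max_le (sspace.trans (by omega)) ?_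
    rw [srun]
    have himg : ({m} : Finset ℕ).image (· + (m + 1)) ∪ {m} = {m} ∪ {2 * m + 1} := by
      rw [Finset.image_singleton]
      have : m + (m + 1) = 2 * m + 1 := by ring
      rw [this, Finset.union_comm]
    rw [himg]
    refine cspace.trans ?_
    have : PebbleAux.spaceC {m} L'.reverse ≤ r := rspace.trans hspace'
    omega
  have hlenfin : Lfin.length ≤ 3 * t := by
    rw [hLfin]
    simp only [List.length_append, List.length_map, List.length_reverse]
    omega
  refine ⟨PebbleAux.toMoveSeq Lfin hlegfin, ?_, ?_, ?_⟩
  · show PebbleAux.runC ∅ (Lfin.take Lfin.length) = {2 * m + 1}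
    rw [List.take_length]; exact hrunfin
  · exact (PebbleAux.toMoveSeq_space Lfin hlegfin).trans hspacefin
  · exact hlenfin
end

section
/- For every j ≥ 0, setting m = 2^j − 1, there exists a move sequence that cleanly computes m with space at most j + 1 and total move count at most (m+1)^(log₂ 3), where the exponentiation is real-number exponentiation with exponent log₂ 3 = Real.logb 2 3. -/
/-!
The schedule for the block of nodes `[b, b + 2^(j+1))` pebbles the last node of its lower half,
recursively pebbles the upper half (which only needs that node as its predecessor), and then
unpebbles the lower half by running its schedule backwards. Moves are reversible, so a reversed
legal schedule is legal, and the intermediate node `b + 2^j - 1` is the only extra pebble held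
during the recursion: space grows by one per level and time triples, giving `3^j` moves for
`m + 1 = 2^j`, that is `(m + 1)^(log₂ 3)`.
-/

namespace PebbleGame

def toggle (S : Finset ℕ) (i : ℕ) : Finset ℕ :=
  if i ∈ S then S.erase i else insert i S

lemma toggle_toggle (S : Finset ℕ) (i : ℕ) : toggle (toggle S i) i = S := by
  by_cases h : i ∈ S <;> simp [toggle, h, Finset.insert_erase]

lemma toggle_of_notMem {S : Finset ℕ} {i : ℕ} (h : i ∉ S) : toggle S i = insert i S :=
  if_neg h

lemma mem_toggle_of_ne {S : Finset ℕ} {a i : ℕ} (h : a ≠ i) : a ∈ toggle S i ↔ a ∈ S := by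
  unfold toggle
  split_ifs <;> simp [h]

lemma toggle_insert_of_ne {S : Finset ℕ} {a i : ℕ} (h : i ≠ a) :
    toggle (insert a S) i = insert a (toggle S i) := by
  by_cases hi : i ∈ S
  · simp [toggle, hi, Finset.erase_insert_of_ne (Ne.symm h)]
  · simp [toggle, hi, h, Finset.insert_comm]

def run (S : Finset ℕ) (L : List ℕ) : Finset ℕ :=
  L.foldl toggle S

lemma run_take_add_one (S : Finset ℕ) {L : List ℕ} {t : ℕ} (ht : t < L.length) :
    run S (L.take (t + 1)) = toggle (run S (L.take t)) L[t] := by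
  rw [List.take_add_one, List.getElem?_eq_getElem ht]
  exact List.foldl_append ..

def LegalMove (S : Finset ℕ) (i : ℕ) : Prop :=
  i = 0 ∨ 1 ≤ i ∧ i - 1 ∈ S

lemma LegalMove.mono {S S' : Finset ℕ} {i : ℕ} (h : LegalMove S i) (hS : S ⊆ S') :
    LegalMove S' i :=
  h.imp_right fun h => ⟨h.1, hS h.2⟩

lemma LegalMove.toggle_self {S : Finset ℕ} {i : ℕ} (h : LegalMove S i) :
    LegalMove (toggle S i) i :=
  h.imp_right fun h => ⟨h.1, (mem_toggle_of_ne (by omega)).2 h.2⟩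

inductive Pebbling (s : ℕ) : Finset ℕ → List ℕ → Finset ℕ → Prop
  | nil {S : Finset ℕ} : S.card ≤ s → Pebbling s S [] S
  | cons {S S' : Finset ℕ} {i : ℕ} {L : List ℕ} : S.card ≤ s → LegalMove S i →
      Pebbling s (toggle S i) L S' → Pebbling s S (i :: L) S'

namespace Pebbling

variable {s : ℕ} {S S' S'' : Finset ℕ} {L L' : List ℕ}

lemma card_le (h : Pebbling s S L S') : S.card ≤ s := by
  cases h <;> assumption

lemma singleton {i : ℕ} (hi : LegalMove S i) (hiS : i ∉ S) (hs : S.card + 1 ≤ s) :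
    Pebbling s S [i] (insert i S) := by
  refine .cons (by omega) hi ?_
  rw [toggle_of_notMem hiS]
  exact .nil ((Finset.card_insert_le _ _).trans hs)

lemma mono {s' : ℕ} (h : Pebbling s S L S') (hs : s ≤ s') : Pebbling s' S L S' := by
  induction h with
  | nil hS => exact .nil (hS.trans hs)
  | cons hS hi _ ih => exact .cons (hS.trans hs) hi ih

lemma append (h : Pebbling s S L S') (h' : Pebbling s S' L' S'') :
    Pebbling s S (L ++ L') S'' := by
  induction h with
  | nil => exact h'
  | cons hS hi _ ih => exact .cons hS hi (ih h')

lemma reverse (h : Pebbling s S L S') : Pebbling s S' L.reverse S := by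
  induction h with
  | nil hS => exact .nil hS
  | @cons S _ i _ hS hi h ih =>
    rw [List.reverse_cons]
    refine ih.append (.cons h.card_le hi.toggle_self ?_)
    rw [toggle_toggle]
    exact .nil hS

lemma insert {a : ℕ} (h : Pebbling s S L S') (ha : a ∉ L) :
    Pebbling (s + 1) (insert a S) L (insert a S') := by
  induction h with
  | nil hS => exact .nil ((Finset.card_insert_le _ _).trans (by omega))
  | @cons S _ i _ hS hi _ ih =>
    have hia : i ≠ a := by rintro rfl; exact ha List.mem_cons_self
    refine .cons ((Finset.card_insert_le _ _).trans (by omega))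
      (hi.mono (Finset.subset_insert _ _)) ?_
    rw [toggle_insert_of_ne hia]
    exact ih fun h => ha (List.mem_cons_of_mem _ h)

lemma drop (h : Pebbling s S L S') (t : ℕ) :
    Pebbling s (run S (L.take t)) (L.drop t) S' := by
  induction h generalizing t with
  | nil hS => simpa [run] using Pebbling.nil hS
  | cons hS hi h ih =>
    cases t with
    | zero => exact .cons hS hi h
    | succ t => exact ih t

lemma run_eq (h : Pebbling s S L S') : run S L = S' := by
  induction h with
  | nil => rfl
  | cons _ _ _ ih => exact ih

end Pebbling

def binarySchedule (b : ℕ) : ℕ → List ℕ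
  | 0 => [b]
  | j + 1 => binarySchedule b j ++ binarySchedule (b + 2 ^ j) j ++ (binarySchedule b j).reverse

lemma length_binarySchedule (b j : ℕ) : (binarySchedule b j).length = 3 ^ j := by
  induction j generalizing b with
  | zero => rfl
  | succ j ih => simp only [binarySchedule, List.length_append, List.length_reverse, ih]; ring

lemma mem_binarySchedule {b j i : ℕ} (hi : i ∈ binarySchedule b j) : b ≤ i ∧ i < b + 2 ^ j := by
  induction j generalizing b with
  | zero => simp_all [binarySchedule]
  | succ j ih =>
    simp only [binarySchedule, List.mem_append, List.mem_reverse] at hi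
    rcases hi with (hi | hi) | hi <;> have := ih hi <;> omega

lemma pebbling_binarySchedule (j : ℕ) {b : ℕ} {S : Finset ℕ}
    (hfree : ∀ i, b ≤ i → i < b + 2 ^ j → i ∉ S) (hb : LegalMove S b) :
    Pebbling (S.card + j + 1) S (binarySchedule b j) (insert (b + 2 ^ j - 1) S) := by
  induction j generalizing b S with
  | zero => exact .singleton hb (hfree b le_rfl (by simp)) le_rfl
  | succ j ih =>
    have hpow : 2 ^ (j + 1) = 2 ^ j + 2 ^ j := by ring
    have hpos : 0 < 2 ^ j := by positivity
    set a := b + 2 ^ j - 1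
    set m := b + 2 ^ (j + 1) - 1
    have lower : Pebbling (S.card + j + 1) S (binarySchedule b j) (insert a S) :=
      ih (fun i hi hi' => hfree i hi (by omega)) hb
    have hfree' : ∀ i, b + 2 ^ j ≤ i → i < b + 2 ^ j + 2 ^ j → i ∉ insert a S := by
      simp only [Finset.mem_insert, not_or]
      exact fun i hi hi' => ⟨by omega, hfree i (by omega) (by omega)⟩
    have upper : Pebbling ((insert a S).card + j + 1) (insert a S)
        (binarySchedule (b + 2 ^ j) j) (insert m (insert a S)) := by
      convert ih hfree' (.inr ⟨by omega, Finset.mem_insert_self a S⟩) using 3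
      omega
    have hm : m ∉ (binarySchedule b j).reverse := fun h =>
      (mem_binarySchedule (List.mem_reverse.1 h)).2.not_ge (by omega)
    have uncompute := lower.reverse.insert hm
    exact ((lower.mono (by omega)).append
      (upper.mono (by have := Finset.card_insert_le a S; omega))).append
      (uncompute.mono (by omega))

end PebbleGame

open PebbleGame

lemma Real.pow_rpow_logb_self {b x : ℝ} (hb : 0 < b) (hb1 : b ≠ 1) (hx : 0 < x) (n : ℕ) :
    (b ^ n) ^ Real.logb b x = x ^ n := by
  rw [← Real.rpow_pow_comm hb.le, Real.rpow_logb hb hb1 hx]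

lemma MoveSeq.exists_of_pebbling {s : ℕ} {L : List ℕ} {S : Finset ℕ} (h : Pebbling s ∅ L S) :
    ∃ M : MoveSeq, M.T = L.length ∧ M.conf M.T = S ∧ M.space ≤ s := by
  refine ⟨⟨L.length, fun t => run ∅ (L.take t), fun t => L.getD t 0, rfl,
    fun t ht => ?_, fun t ht => ?_⟩, rfl, ?_, ?_⟩
  · have h' := h.drop t
    rw [List.drop_eq_getElem_cons ht] at h'
    rw [List.getD_eq_getElem _ _ ht]
    cases h'
    assumption
  · rw [List.getD_eq_getElem _ _ ht]
    exact run_take_add_one ∅ ht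
  · simpa using h.run_eq
  · exact Finset.sup_le fun t _ => (h.drop t).card_le

/-- for `m = 2^j - 1`, clean computation with space `≤ j + 1` and
move count at most `(m+1)^(log₂ 3)`. -/
theorem binary_recursion_rpow_time (j m : ℕ) (hm : m = 2 ^ j - 1) :
    ∃ M : MoveSeq, M.CleanlyComputes m ∧ M.space ≤ j + 1 ∧
      (M.T : ℝ) ≤ ((m : ℝ) + 1) ^ Real.logb 2 3 := by
  have schedule := pebbling_binarySchedule j (b := 0) (S := ∅) (by simp) (.inl rfl)
  obtain ⟨M, hT, hconf, hspace⟩ := MoveSeq.exists_of_pebbling schedule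
  refine ⟨M, by rw [MoveSeq.CleanlyComputes, hconf, hm]; simp, by simpa using hspace, ?_⟩
  have hm1 : (m : ℝ) + 1 = 2 ^ j := by
    rw [hm, Nat.cast_sub Nat.one_le_two_pow]
    push_cast
    ring
  rw [hT, length_binarySchedule, hm1,
    Real.pow_rpow_logb_self (by norm_num) (by norm_num) (by norm_num)]
  push_cast
  rfl
end

section
/- For every k ≥ 1: if there exists a move sequence that cleanly computes m with space at most r and total move count t, then there exists a move sequence that cleanly computes km + k − 1 with space at most r + k − 1 and total move count at most (2k − 1)·t. -/
def toggle (S : Finset ℕ) (i : ℕ) : Finset ℕ :=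
  if i ∈ S then S.erase i else insert i S

lemma toggle_toggle (S : Finset ℕ) (i : ℕ) : toggle (toggle S i) i = S := by
  unfold toggle
  by_cases h : i ∈ S
  · simp [h, Finset.insert_erase h]
  · simp [h, Finset.erase_insert h]

lemma mem_toggle_of_ne {S : Finset ℕ} {i j : ℕ} (h : j ≠ i) :
    j ∈ toggle S i ↔ j ∈ S := by
  unfold toggle
  split <;> simp [h]

lemma toggle_inter_of_mem {X R : Finset ℕ} {i : ℕ} (h : i ∈ R) :
    toggle (X ∩ R) i = toggle X i ∩ R := by
  unfold toggle
  by_cases hx : i ∈ X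
  · rw [if_pos (Finset.mem_inter.mpr ⟨hx, h⟩), if_pos hx, Finset.erase_inter]
  · rw [if_neg (fun hc => hx (Finset.mem_inter.mp hc).1), if_neg hx,
      Finset.insert_inter_of_mem h]

lemma toggle_inter_of_not_mem {X R : Finset ℕ} {i : ℕ} (h : i ∉ R) :
    toggle X i ∩ R = X ∩ R := by
  unfold toggle
  split
  · ext a; simp only [Finset.mem_inter, Finset.mem_erase]
    constructor
    · rintro ⟨⟨_, ha⟩, hr⟩; exact ⟨ha, hr⟩
    · rintro ⟨ha, hr⟩; exact ⟨⟨fun e => h (e ▸ hr), ha⟩, hr⟩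
  · ext a; simp only [Finset.mem_inter, Finset.mem_insert]
    constructor
    · rintro ⟨h1 | h1, hr⟩
      · exact absurd (h1 ▸ hr) h
      · exact ⟨h1, hr⟩
    · rintro ⟨ha, hr⟩; exact ⟨Or.inr ha, hr⟩

lemma toggle_union_image (S X : Finset ℕ) (i d : ℕ) (h : i + d ∉ S) :
    toggle (S ∪ X.image (· + d)) (i + d) = S ∪ (toggle X i).image (· + d) := by
  have hinj : Function.Injective (· + d : ℕ → ℕ) := fun a b hab => by simpa using hab
  have hmem : i + d ∈ S ∪ X.image (· + d) ↔ i ∈ X := by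
    simp only [Finset.mem_union, Finset.mem_image]
    constructor
    · rintro (hs | ⟨x, hx, he⟩)
      · exact absurd hs h
      · have : x = i := by omega
        exact this ▸ hx
    · exact fun hx => Or.inr ⟨i, hx, rfl⟩
  unfold toggle
  by_cases hi : i ∈ X
  · rw [if_pos (hmem.mpr hi), if_pos hi, Finset.erase_union_distrib,
      Finset.erase_eq_of_notMem h, Finset.image_erase hinj]
  · rw [if_neg (fun hc => hi (hmem.mp hc)), if_neg hi, Finset.image_insert,
      Finset.union_insert]

structure Seg where
  T : ℕ
  conf : ℕ → Finset ℕ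
  move : ℕ → ℕ
  legal : ∀ t < T, move t = 0 ∨ (1 ≤ move t ∧ move t - 1 ∈ conf t)
  step : ∀ t < T, conf (t + 1) = toggle (conf t) (move t)

def MoveSeq.toSeg (M : MoveSeq) : Seg where
  T := M.T
  conf := M.conf
  move := M.move
  legal := M.legal
  step := fun t ht => M.step t ht

def Seg.append (A B : Seg) (h : B.conf 0 = A.conf A.T) : Seg where
  T := A.T + B.T
  conf := fun t => if t ≤ A.T then A.conf t else B.conf (t - A.T)
  move := fun t => if t < A.T then A.move t else B.move (t - A.T)
  legal := by
    intro t ht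
    by_cases h1 : t < A.T
    · simp only [if_pos h1, if_pos (le_of_lt h1)]
      exact A.legal t h1
    · have h2 : A.T ≤ t := le_of_not_gt h1
      have hc : (if t ≤ A.T then A.conf t else B.conf (t - A.T)) = B.conf (t - A.T) := by
        rcases eq_or_lt_of_le h2 with h3 | h3
        · rw [if_pos h3.ge, ← h3, Nat.sub_self, h]
        · rw [if_neg (by omega)]
      rw [hc, if_neg h1]
      exact B.legal (t - A.T) (by omega)
  step := by
    intro t ht
    by_cases h1 : t < A.T
    · simp only [if_pos h1, if_pos (le_of_lt h1), if_pos (Nat.succ_le_of_lt h1)]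
      exact A.step t h1
    · have h2 : A.T ≤ t := le_of_not_gt h1
      have hc : (if t ≤ A.T then A.conf t else B.conf (t - A.T)) = B.conf (t - A.T) := by
        rcases eq_or_lt_of_le h2 with h3 | h3
        · rw [if_pos h3.ge, ← h3, Nat.sub_self, h]
        · rw [if_neg (by omega)]
      rw [hc, if_neg h1, if_neg (by omega : ¬ t + 1 ≤ A.T)]
      have h4 : t + 1 - A.T = (t - A.T) + 1 := by omega
      rw [h4]
      exact B.step (t - A.T) (by omega)

def Seg.reverse (A : Seg) : Seg where
  T := A.T
  conf := fun t => A.conf (A.T - t)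
  move := fun t => A.move (A.T - 1 - t)
  legal := by
    intro t ht
    have hs : A.T - 1 - t < A.T := by omega
    have h1 : A.T - t = (A.T - 1 - t) + 1 := by omega
    rcases A.legal (A.T - 1 - t) hs with h0 | ⟨hge, hmem⟩
    · exact Or.inl h0
    · refine Or.inr ⟨hge, ?_⟩
      rw [h1, A.step _ hs, mem_toggle_of_ne (by omega)]
      exact hmem
  step := by
    intro t ht
    have hs : A.T - 1 - t < A.T := by omega
    have h1 : A.T - t = (A.T - 1 - t) + 1 := by omega
    have h2 : A.T - (t + 1) = A.T - 1 - t := by omega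
    rw [h1, h2, A.step _ hs, toggle_toggle]

def Seg.shift (A : Seg) (d m : ℕ) (S : Finset ℕ)
    (hm : ∀ t < A.T, A.move t ≤ m)
    (hd : d = 0 ∨ (1 ≤ d ∧ d - 1 ∈ S))
    (hS : ∀ x ∈ S, x ∉ Finset.Icc d (d + m)) : Seg where
  T := A.T
  conf := fun t => S ∪ (A.conf t).image (· + d)
  move := fun t => A.move t + d
  legal := by
    intro t ht
    rcases A.legal t ht with h0 | ⟨hge, hmem⟩
    · rcases hd with hd0 | ⟨hd1, hd2⟩
      · exact Or.inl (by omega)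
      · refine Or.inr ⟨by omega, ?_⟩
        have : A.move t + d - 1 = d - 1 := by omega
        rw [this]
        exact Finset.mem_union_left _ hd2
    · refine Or.inr ⟨by omega, ?_⟩
      have : A.move t + d - 1 = (A.move t - 1) + d := by omega
      rw [this]
      exact Finset.mem_union_right _ (Finset.mem_image_of_mem _ hmem)
  step := by
    intro t ht
    have hns : A.move t + d ∉ S := by
      intro hmm
      exact hS _ hmm (Finset.mem_Icc.mpr ⟨by omega, by have := hm t ht; omega⟩)
    rw [A.step t ht, toggle_union_image _ _ _ _ hns]

@[simp] lemma Seg.shift_conf (A : Seg) (d m : ℕ) (S : Finset ℕ) (hm hd hS) (t : ℕ) :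
    (A.shift d m S hm hd hS).conf t = S ∪ (A.conf t).image (· + d) := rfl

@[simp] lemma Seg.shift_T (A : Seg) (d m : ℕ) (S : Finset ℕ) (hm hd hS) :
    (A.shift d m S hm hd hS).T = A.T := rfl

@[simp] lemma Seg.reverse_conf (A : Seg) (t : ℕ) : A.reverse.conf t = A.conf (A.T - t) := rfl
@[simp] lemma Seg.reverse_T (A : Seg) : A.reverse.T = A.T := rfl
@[simp] lemma Seg.append_T (A B : Seg) (h) : (A.append B h).T = A.T + B.T := rfl

lemma Seg.append_conf_le (A B : Seg) (h) {t : ℕ} (ht : t ≤ A.T) :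
    (A.append B h).conf t = A.conf t := if_pos ht

lemma Seg.append_conf_ge (A B : Seg) (h) {t : ℕ} (ht : A.T ≤ t) :
    (A.append B h).conf t = B.conf (t - A.T) := by
  show (if t ≤ A.T then A.conf t else B.conf (t - A.T)) = _
  rcases eq_or_lt_of_le ht with h3 | h3
  · rw [if_pos h3.ge, ← h3, Nat.sub_self, h]
  · rw [if_neg (by omega)]

lemma MoveSeq.card_conf_le_space (M : MoveSeq) {n : ℕ} (hn : n ≤ M.T) :
    (M.conf n).card ≤ M.space :=
  Finset.le_sup (f := fun t => (M.conf t).card) (Finset.mem_range.mpr (by omega))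

lemma MoveSeq.step' (M : MoveSeq) {t : ℕ} (ht : t < M.T) :
    M.conf (t + 1) = toggle (M.conf t) (M.move t) := M.step t ht

lemma prune (M : MoveSeq) (m : ℕ) (hc : M.CleanlyComputes m) :
    ∃ N : MoveSeq, N.CleanlyComputes m ∧ N.T ≤ M.T ∧ (∀ s < N.T, N.move s ≤ m) ∧
      ∀ s ≤ N.T, (N.conf s).card ≤ M.space := by
  have claim : ∀ n, n ≤ M.T → ∃ N : MoveSeq, N.T ≤ n ∧
      N.conf N.T = M.conf n ∩ Finset.range (m + 1) ∧
      (∀ s < N.T, N.move s ≤ m) ∧ ∀ s ≤ N.T, (N.conf s).card ≤ M.space := by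
    intro n
    induction n with
    | zero =>
      intro _
      refine ⟨⟨0, fun _ => ∅, fun _ => 0, rfl,
        fun t ht => absurd ht (Nat.not_lt_zero t),
        fun t ht => absurd ht (Nat.not_lt_zero t)⟩, le_rfl, ?_, ?_, ?_⟩
      · show (∅ : Finset ℕ) = M.conf 0 ∩ Finset.range (m + 1)
        rw [M.init, Finset.empty_inter]
      · intro s hs; exact Nat.zero_le m
      · intro s hs
        show (∅ : Finset ℕ).card ≤ M.space
        simp
    | succ n ih =>
      intro hn1
      have hn : n < M.T := by omega
      obtain ⟨N, hNT, hNconf, hNmove, hNcard⟩ := ih (by omega)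
      by_cases him : M.move n ≤ m
      · -- extend N by one step toggling M.move n
        refine ⟨⟨N.T + 1,
          fun s => if s ≤ N.T then N.conf s else toggle (N.conf N.T) (M.move n),
          fun s => if s < N.T then N.move s else M.move n,
          ?_, ?_, ?_⟩, Nat.succ_le_succ hNT, ?_, ?_, ?_⟩
        · show (if 0 ≤ N.T then N.conf 0 else toggle (N.conf N.T) (M.move n)) = ∅
          rw [if_pos (Nat.zero_le _)]; exact N.init
        · intro s hs
          have hs' : s < N.T + 1 := hs
          by_cases h1 : s < N.T
          · rw [if_pos h1, if_pos (le_of_lt h1)]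
            exact N.legal s h1
          · have hsT : s = N.T := by omega
            rw [if_neg h1, if_pos (le_of_eq hsT), hsT]
            rcases M.legal n hn with h0 | ⟨hge, hmem⟩
            · exact Or.inl h0
            · refine Or.inr ⟨hge, ?_⟩
              rw [hNconf]
              exact Finset.mem_inter.mpr ⟨hmem, Finset.mem_range.mpr (by omega)⟩
        · intro s hs
          have hs' : s < N.T + 1 := hs
          by_cases h1 : s < N.T
          · rw [if_pos h1, if_pos (le_of_lt h1), if_pos (Nat.succ_le_of_lt h1)]
            exact N.step s h1
          · have hsT : s = N.T := by omega
            rw [if_neg h1, if_pos (le_of_eq hsT), if_neg (by omega), hsT]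
            rfl
        · show (if N.T + 1 ≤ N.T then N.conf (N.T + 1) else toggle (N.conf N.T) (M.move n)) =
            M.conf (n + 1) ∩ Finset.range (m + 1)
          rw [if_neg (by omega), hNconf,
            toggle_inter_of_mem (Finset.mem_range.mpr (by omega)), ← M.step' hn]
        · intro s hs
          have hs' : s < N.T + 1 := hs
          dsimp only
          by_cases h1 : s < N.T
          · rw [if_pos h1]; exact hNmove s h1
          · rw [if_neg h1]; exact him
        · intro s hs
          have hs' : s ≤ N.T + 1 := hs
          dsimp only
          by_cases h1 : s ≤ N.T
          · rw [if_pos h1]; exact hNcard s h1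
          · rw [if_neg h1, hNconf, toggle_inter_of_mem (Finset.mem_range.mpr (by omega)),
              ← M.step' hn]
            exact le_trans (Finset.card_le_card Finset.inter_subset_left)
              (M.card_conf_le_space (by omega))
      · -- drop this move: it toggles a node > m
        refine ⟨N, by omega, ?_, hNmove, hNcard⟩
        rw [hNconf, ← toggle_inter_of_not_mem (X := M.conf n)
          (i := M.move n) (by simp; omega), ← M.step' hn]
  obtain ⟨N, hNT, hNconf, hNmove, hNcard⟩ := claim M.T le_rfl
  refine ⟨N, ?_, hNT, hNmove, hNcard⟩
  unfold MoveSeq.CleanlyComputes at hc ⊢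
  rw [hNconf, hc, Finset.singleton_inter_of_mem (Finset.mem_range.mpr (by omega))]

def tops (m j : ℕ) : Finset ℕ := (Finset.range j).image (fun i => i * (m + 1) + m)

lemma tops_zero (m : ℕ) : tops m 0 = ∅ := by simp [tops]

lemma tops_succ (m j : ℕ) : tops m (j + 1) = tops m j ∪ {j * (m + 1) + m} := by
  unfold tops
  rw [Finset.range_add_one, Finset.image_insert, Finset.insert_eq, Finset.union_comm]

lemma tops_card (m j : ℕ) : (tops m j).card ≤ j :=
  le_trans Finset.card_image_le (by simp)

lemma tops_lt (m j : ℕ) : ∀ x ∈ tops m j, x < j * (m + 1) := by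
  intro x hx
  obtain ⟨i, hi, rfl⟩ := Finset.mem_image.mp hx
  have hi' : i < j := Finset.mem_range.mp hi
  have h1 : (i + 1) * (m + 1) ≤ j * (m + 1) := Nat.mul_le_mul (by omega) le_rfl
  have h2 : (i + 1) * (m + 1) = i * (m + 1) + (m + 1) := by ring
  omega

lemma tops_mem (m : ℕ) {i j : ℕ} (h : i < j) : i * (m + 1) + m ∈ tops m j :=
  Finset.mem_image.mpr ⟨i, Finset.mem_range.mpr h, rfl⟩

/-- `k`-ary recursion step: from a clean computation of `m` with
space `≤ r` and move count `t`, obtain a clean computation of `km + k - 1` with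
space `≤ r + k - 1` and move count `≤ (2k - 1)·t`. -/
theorem kary_recursion_step (k : ℕ) (hk : 1 ≤ k) (m r t : ℕ) (M : MoveSeq)
    (hc : M.CleanlyComputes m) (hs : M.space ≤ r) (ht : M.T = t) :
    ∃ M' : MoveSeq, M'.CleanlyComputes (k * m + k - 1) ∧
      M'.space ≤ r + k - 1 ∧ M'.T ≤ (2 * k - 1) * t := by
  subst ht
  have hr1 : 1 ≤ r := by
    have h1 : (M.conf M.T).card ≤ M.space := M.card_conf_le_space le_rfl
    rw [show M.conf M.T = {m} from hc] at h1
    simp at h1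
    omega
  obtain ⟨N, hNc, hNT, hNmove, hNcard⟩ := prune M m hc
  have hNc' : N.conf N.T = {m} := hNc
  have hNr : ∀ s ≤ N.T, (N.conf s).card ≤ r := fun s h => le_trans (hNcard s h) hs
  -- forward phases
  have fwd : ∀ j, j ≤ k → ∃ A : Seg, A.conf 0 = ∅ ∧ A.conf A.T = tops m j ∧
      A.T = j * N.T ∧ ∀ s ≤ A.T, (A.conf s).card ≤ r + j - 1 := by
    intro j
    induction j with
    | zero =>
      intro _
      refine ⟨⟨0, fun _ => ∅, fun _ => 0, fun s hs => absurd hs (Nat.not_lt_zero s),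
        fun s hs => absurd hs (Nat.not_lt_zero s)⟩, rfl, (tops_zero m).symm, by simp, ?_⟩
      intro s hs
      show (∅ : Finset ℕ).card ≤ r + 0 - 1
      simp
    | succ j ih =>
      intro hj
      obtain ⟨A, hA0, hAT, hAlen, hAcard⟩ := ih (by omega)
      have hd : j * (m + 1) = 0 ∨ (1 ≤ j * (m + 1) ∧ j * (m + 1) - 1 ∈ tops m j) := by
        rcases Nat.eq_zero_or_pos j with hj0 | hj0
        · left; simp [hj0]
        · right
          obtain ⟨j', rfl⟩ : ∃ j', j = j' + 1 := ⟨j - 1, by omega⟩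
          have he : (j' + 1) * (m + 1) = j' * (m + 1) + m + 1 := by ring
          refine ⟨by omega, ?_⟩
          have h2 : (j' + 1) * (m + 1) - 1 = j' * (m + 1) + m := by omega
          rw [h2]
          exact tops_mem m (by omega)
      have hS : ∀ x ∈ tops m j, x ∉ Finset.Icc (j * (m + 1)) (j * (m + 1) + m) := by
        intro x hx
        have := tops_lt m j x hx
        simp only [Finset.mem_Icc]
        omega
      have hmv : ∀ s < N.toSeg.T, N.toSeg.move s ≤ m := fun s hs => hNmove s hs
      set NS := N.toSeg.shift (j * (m + 1)) m (tops m j) hmv hd hS with hNS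
      have hcomp : NS.conf 0 = A.conf A.T := by
        show tops m j ∪ (N.conf 0).image (· + j * (m + 1)) = A.conf A.T
        rw [N.init, Finset.image_empty, Finset.union_empty, hAT]
      refine ⟨A.append NS hcomp, ?_, ?_, ?_, ?_⟩
      · rw [Seg.append_conf_le _ _ _ (Nat.zero_le _), hA0]
      · rw [Seg.append_conf_ge _ _ _ (by show A.T ≤ A.T + N.T; omega)]
        have h5 : (A.append NS hcomp).T - A.T = N.T := by
          show A.T + N.T - A.T = N.T; omega
        rw [h5]
        show tops m j ∪ (N.conf N.T).image (· + j * (m + 1)) = tops m (j + 1)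
        rw [hNc', Finset.image_singleton, tops_succ, Nat.add_comm m (j * (m + 1))]
      · show A.T + N.T = (j + 1) * N.T
        rw [hAlen]; ring
      · intro s hs
        have hs' : s ≤ A.T + N.T := hs
        by_cases h1 : s ≤ A.T
        · rw [Seg.append_conf_le _ _ _ h1]
          have := hAcard s h1
          omega
        · rw [Seg.append_conf_ge _ _ _ (by omega)]
          show (tops m j ∪ (N.conf (s - A.T)).image (· + j * (m + 1))).card ≤ r + (j + 1) - 1
          refine le_trans (Finset.card_union_le _ _) ?_
          have h2 := tops_card m j
          have h3 : ((N.conf (s - A.T)).image (· + j * (m + 1))).card ≤ r :=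
            le_trans Finset.card_image_le (hNr (s - A.T) (by omega))
          omega
  -- backward phases
  have bwd : ∀ j, j ≤ k - 1 → ∃ B : Seg, B.conf 0 = ∅ ∧
      B.conf B.T = tops m (k - 1 - j) ∪ {(k - 1) * (m + 1) + m} ∧
      B.T = (k + j) * N.T ∧ ∀ s ≤ B.T, (B.conf s).card ≤ r + k - 1 := by
    intro j
    induction j with
    | zero =>
      intro _
      obtain ⟨A, hA0, hAT, hAlen, hAcard⟩ := fwd k le_rfl
      refine ⟨A, hA0, ?_, by rw [hAlen]; ring, hAcard⟩
      rw [hAT, Nat.sub_zero]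
      conv_lhs => rw [show k = (k - 1) + 1 from by omega]
      rw [tops_succ]
    | succ j ih =>
      intro hj
      obtain ⟨B, hB0, hBT, hBlen, hBcard⟩ := ih (by omega)
      set i := k - 2 - j with hi
      have hik : i + 1 ≤ k - 1 := by omega
      have hki : k - 1 - j = i + 1 := by omega
      have hki' : k - 1 - (j + 1) = i := by omega
      set S := tops m i ∪ {(k - 1) * (m + 1) + m} with hSdef
      have hmv : ∀ s < N.toSeg.reverse.T, N.toSeg.reverse.move s ≤ m := by
        intro s hs
        have hs' : s < N.T := hs
        show N.move (N.T - 1 - s) ≤ m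
        exact hNmove _ (by omega)
      have hd : i * (m + 1) = 0 ∨ (1 ≤ i * (m + 1) ∧ i * (m + 1) - 1 ∈ S) := by
        rcases Nat.eq_zero_or_pos i with hi0 | hi0
        · left; simp [hi0]
        · right
          obtain ⟨i', hii⟩ : ∃ i', i = i' + 1 := ⟨i - 1, by omega⟩
          rw [hii]
          have he : (i' + 1) * (m + 1) = i' * (m + 1) + m + 1 := by ring
          refine ⟨by omega, ?_⟩
          have h2 : (i' + 1) * (m + 1) - 1 = i' * (m + 1) + m := by omega
          rw [h2, hSdef, hii]
          exact Finset.mem_union_left _ (tops_mem m (by omega))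
      have hS : ∀ x ∈ S, x ∉ Finset.Icc (i * (m + 1)) (i * (m + 1) + m) := by
        intro x hx
        simp only [Finset.mem_Icc]
        rw [hSdef] at hx
        rcases Finset.mem_union.mp hx with hx1 | hx1
        · have := tops_lt m i x hx1
          omega
        · have hx2 : x = (k - 1) * (m + 1) + m := Finset.mem_singleton.mp hx1
          have h1 : (i + 1) * (m + 1) ≤ (k - 1) * (m + 1) := Nat.mul_le_mul hik le_rfl
          have h2 : (i + 1) * (m + 1) = i * (m + 1) + (m + 1) := by ring
          omega
      set RS := N.toSeg.reverse.shift (i * (m + 1)) m S hmv hd hS with hRS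
      have hcomp : RS.conf 0 = B.conf B.T := by
        show S ∪ (N.conf (N.T - 0)).image (· + i * (m + 1)) = B.conf B.T
        rw [Nat.sub_zero, hNc', Finset.image_singleton, hBT, hki, tops_succ, hSdef]
        rw [Nat.add_comm m (i * (m + 1))]
        ext a
        simp only [Finset.mem_union, Finset.mem_singleton]
        tauto
      refine ⟨B.append RS hcomp, ?_, ?_, ?_, ?_⟩
      · rw [Seg.append_conf_le _ _ _ (Nat.zero_le _), hB0]
      · rw [Seg.append_conf_ge _ _ _ (by show B.T ≤ B.T + N.T; omega)]
        have h5 : (B.append RS hcomp).T - B.T = N.T := by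
          show B.T + N.T - B.T = N.T; omega
        rw [h5]
        show S ∪ (N.conf (N.T - N.T)).image (· + i * (m + 1)) = _
        rw [Nat.sub_self, N.init, Finset.image_empty, Finset.union_empty, hSdef, hki']
      · show B.T + N.T = (k + (j + 1)) * N.T
        rw [hBlen]; ring
      · intro s hs
        have hs' : s ≤ B.T + N.T := hs
        by_cases h1 : s ≤ B.T
        · rw [Seg.append_conf_le _ _ _ h1]
          exact hBcard s h1
        · rw [Seg.append_conf_ge _ _ _ (by omega)]
          show (S ∪ (N.conf (N.T - (s - B.T))).image (· + i * (m + 1))).card ≤ r + k - 1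
          refine le_trans (Finset.card_union_le _ _) ?_
          have h2 : S.card ≤ i + 1 := by
            rw [hSdef]
            refine le_trans (Finset.card_union_le _ _) ?_
            have := tops_card m i
            simp only [Finset.card_singleton]
            omega
          have h3 : ((N.conf (N.T - (s - B.T))).image (· + i * (m + 1))).card ≤ r :=
            le_trans Finset.card_image_le (hNr _ (by omega))
          omega
  obtain ⟨B, hB0, hBT, hBlen, hBcard⟩ := bwd (k - 1) le_rfl
  refine ⟨⟨B.T, B.conf, B.move, hB0, B.legal, B.step⟩, ?_, ?_, ?_⟩
  · show B.conf B.T = {k * m + k - 1}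
    rw [hBT, Nat.sub_self, tops_zero, Finset.empty_union]
    congr 1
    obtain ⟨k', rfl⟩ : ∃ k', k = k' + 1 := ⟨k - 1, by omega⟩
    have h1 : (k' + 1) * m + (k' + 1) - 1 = (k' + 1) * m + k' := by omega
    simp only [Nat.add_sub_cancel]
    rw [h1]; ring
  · show (Finset.range (B.T + 1)).sup (fun s => (B.conf s).card) ≤ r + k - 1
    refine Finset.sup_le ?_
    intro s hsmem
    exact hBcard s (Nat.lt_succ_iff.mp (Finset.mem_range.mp hsmem))
  · show B.T ≤ (2 * k - 1) * M.T
    rw [hBlen]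
    have h1 : k + (k - 1) ≤ 2 * k - 1 := by omega
    exact le_trans (Nat.mul_le_mul h1 hNT) le_rfl
end

section
/- For all k ≥ 2 and j ≥ 0 there exists a move sequence that cleanly computes k^j − 1 with space at most 1 + (k−1)·j and total move count at most (2k − 1)^j. -/
/-!
Call a move list a strategy for the block of nodes `[c, c + n)` if, started from any
configuration in which the node `c - 1` is pebbled and the block is empty, it legally ends
with exactly one new pebble, on `c + n - 1`. Strategies compose in Bennett's way: if `A`
works on `[c, c + n₁)` and `B` on `[c + n₁, c + n₁ + n₂)`, then `A ++ B ++ A.reverse` works on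
`[c, c + n₁ + n₂)`, since a reversed legal sequence is legal and undoes its effect; the pebble
on `c + n₁ - 1` costs one extra unit of space. The `k`-ary strategy of depth `j + 1` is the
`(k - 1)`-fold nesting of such compositions of `k` depth-`j` strategies on consecutive blocks
of `k ^ j` nodes, so each level adds `k - 1` to the space and multiplies the length by `2k - 1`.
-/

namespace Pebbling

def toggle (S : Finset ℕ) (i : ℕ) : Finset ℕ :=
  if i ∈ S then S.erase i else insert i S

def run (S : Finset ℕ) (l : List ℕ) : Finset ℕ := l.foldl toggle S

def CanToggle (S : Finset ℕ) (i : ℕ) : Prop := i = 0 ∨ 1 ≤ i ∧ i - 1 ∈ S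

def Legal : Finset ℕ → List ℕ → Prop
  | _, [] => True
  | S, i :: l => CanToggle S i ∧ Legal (toggle S i) l

def maxCard : Finset ℕ → List ℕ → ℕ
  | S, [] => S.card
  | S, i :: l => max S.card (maxCard (toggle S i) l)

section Basic

variable {S : Finset ℕ} {i : ℕ}

lemma toggle_of_notMem (h : i ∉ S) : toggle S i = insert i S := if_neg h

lemma toggle_toggle (S : Finset ℕ) (i : ℕ) : toggle (toggle S i) i = S := by
  unfold toggle
  by_cases h : i ∈ S <;> simp [h, Finset.insert_erase]

lemma mem_toggle_of_ne {x : ℕ} (h : x ≠ i) : x ∈ toggle S i ↔ x ∈ S := by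
  unfold toggle; split <;> simp [h]

lemma CanToggle.mono {T : Finset ℕ} (h : CanToggle S i) (hST : S ⊆ T) : CanToggle T i :=
  h.imp_right fun h => ⟨h.1, hST h.2⟩

lemma canToggle_toggle_self : CanToggle (toggle S i) i ↔ CanToggle S i := by
  refine or_congr_right (and_congr_right fun hi => mem_toggle_of_ne ?_)
  omega

@[simp] lemma run_nil (S : Finset ℕ) : run S [] = S := rfl

@[simp] lemma run_cons (S : Finset ℕ) (i : ℕ) (l : List ℕ) :
    run S (i :: l) = run (toggle S i) l := rfl

lemma run_append (S : Finset ℕ) (l₁ l₂ : List ℕ) : run S (l₁ ++ l₂) = run (run S l₁) l₂ :=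
  List.foldl_append

lemma legal_append_iff {l₁ l₂ : List ℕ} :
    Legal S (l₁ ++ l₂) ↔ Legal S l₁ ∧ Legal (run S l₁) l₂ := by
  induction l₁ generalizing S with
  | nil => simp [Legal]
  | cons i l ih => simp only [List.cons_append, Legal, ih, run_cons, and_assoc]

lemma card_le_maxCard (S : Finset ℕ) (l : List ℕ) : S.card ≤ maxCard S l := by
  cases l <;> simp [maxCard]

lemma maxCard_append (S : Finset ℕ) (l₁ l₂ : List ℕ) :
    maxCard S (l₁ ++ l₂) = max (maxCard S l₁) (maxCard (run S l₁) l₂) := by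
  induction l₁ generalizing S with
  | nil => exact (max_eq_right (card_le_maxCard S l₂)).symm
  | cons i l ih => simp [maxCard, ih, max_assoc]

lemma run_reverse (S : Finset ℕ) (l : List ℕ) : run (run S l) l.reverse = S := by
  induction l generalizing S with
  | nil => rfl
  | cons i l ih => rw [List.reverse_cons, run_cons, run_append, ih, run_cons, run_nil,
      toggle_toggle]

lemma legal_reverse {l : List ℕ} (h : Legal S l) : Legal (run S l) l.reverse := by
  induction l generalizing S with
  | nil => trivial
  | cons i l ih =>
    rw [List.reverse_cons, legal_append_iff, run_cons, run_reverse]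
    exact ⟨ih h.2, canToggle_toggle_self.mpr h.1, trivial⟩

lemma maxCard_reverse (S : Finset ℕ) (l : List ℕ) :
    maxCard (run S l) l.reverse = maxCard S l := by
  induction l generalizing S with
  | nil => rfl
  | cons i l ih =>
    rw [List.reverse_cons, run_cons, maxCard_append, run_reverse, ih]
    have := card_le_maxCard (toggle S i) l
    simp only [maxCard, toggle_toggle]
    omega

end Basic

def ReadyFor (c n : ℕ) (S : Finset ℕ) : Prop :=
  CanToggle S c ∧ Disjoint S (Finset.Ico c (c + n))

def ComputesBlock (l : List ℕ) (c n m : ℕ) : Prop :=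
  ∀ S, ReadyFor c n S →
    Legal S l ∧ run S l = insert (c + n - 1) S ∧ maxCard S l ≤ S.card + m

lemma computesBlock_singleton (c : ℕ) : ComputesBlock [c] c 1 1 := by
  intro S ⟨hc, hdisj⟩
  have hcS : c ∉ S := Finset.disjoint_right.mp hdisj (by simp)
  have hrun : run S [c] = insert c S := toggle_of_notMem hcS
  refine ⟨⟨hc, trivial⟩, by simpa using hrun, ?_⟩
  simpa [maxCard, toggle_of_notMem hcS] using Finset.card_insert_le c S

lemma ComputesBlock.bennett {l₁ l₂ : List ℕ} {c n₁ n₂ m₁ m₂ : ℕ}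
    (h₁ : ComputesBlock l₁ c n₁ m₁) (h₂ : ComputesBlock l₂ (c + n₁) n₂ m₂)
    (hn₁ : 0 < n₁) (hn₂ : 0 < n₂) :
    ComputesBlock (l₁ ++ l₂ ++ l₁.reverse) c (n₁ + n₂) (max m₁ m₂ + 1) := by
  intro S ⟨hc, hdisj⟩
  rw [← add_assoc]
  have hS₁ : ReadyFor c n₁ S :=
    ⟨hc, hdisj.mono_right (Finset.Ico_subset_Ico_right (by omega))⟩
  have hS₂ : ReadyFor (c + n₁) n₂ (insert (c + n₁ - 1) S) := by
    refine ⟨Or.inr ⟨by omega, Finset.mem_insert_self _ _⟩, Finset.disjoint_insert_left.mpr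
      ⟨by simp; omega, hdisj.mono_right (Finset.Ico_subset_Ico (by omega) (by omega))⟩⟩
  have hS₃ : ReadyFor c n₁ (insert (c + n₁ + n₂ - 1) S) :=
    ⟨hc.mono (Finset.subset_insert _ _),
      Finset.disjoint_insert_left.mpr ⟨by simp; omega, hS₁.2⟩⟩
  obtain ⟨L₁, R₁, M₁⟩ := h₁ S hS₁
  obtain ⟨L₂, R₂, M₂⟩ := h₂ _ hS₂
  obtain ⟨L₃, R₃, M₃⟩ := h₁ _ hS₃
  have hswap : run S (l₁ ++ l₂) = run (insert (c + n₁ + n₂ - 1) S) l₁ := by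
    rw [run_append, R₁, R₂, R₃, Finset.insert_comm]
  refine ⟨?_, ?_, ?_⟩
  · rw [legal_append_iff, legal_append_iff, R₁, hswap]
    exact ⟨⟨L₁, L₂⟩, legal_reverse L₃⟩
  · rw [run_append, hswap, run_reverse]
  · have := Finset.card_insert_le (c + n₁ - 1) S
    have := Finset.card_insert_le (c + n₁ + n₂ - 1) S
    rw [maxCard_append, maxCard_append, R₁, hswap, maxCard_reverse]
    refine max_le (max_le ?_ ?_) ?_ <;> omega

/-- `p c ++ p (c + n) ++ ⋯ ++ p (c + r * n)`, followed by the reverses of all blocks but the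
last one, in reverse order. -/
def chain (p : ℕ → List ℕ) (n : ℕ) : ℕ → ℕ → List ℕ
  | 0, c => p c
  | r + 1, c => p c ++ chain p n r (c + n) ++ (p c).reverse

section Chain

variable {p : ℕ → List ℕ} {n : ℕ}

lemma computesBlock_chain {m : ℕ} (hp : ∀ c, ComputesBlock (p c) c n m) (hn : 0 < n)
    (r c : ℕ) : ComputesBlock (chain p n r c) c ((r + 1) * n) (m + r) := by
  induction r generalizing c with
  | zero => simpa [chain] using hp c
  | succ r ih =>
    have h := (hp c).bennett (ih (c + n)) hn (by positivity)
    rwa [show n + (r + 1) * n = (r + 1 + 1) * n by ring,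
      show max m (m + r) + 1 = m + (r + 1) by omega] at h

lemma length_chain {L : ℕ} (hp : ∀ c, (p c).length = L) (r c : ℕ) :
    (chain p n r c).length = (2 * r + 1) * L := by
  induction r generalizing c with
  | zero => simp [chain, hp]
  | succ r ih => simp only [chain, List.length_append, List.length_reverse, hp, ih]; ring

end Chain

def kary (k : ℕ) : ℕ → ℕ → List ℕ
  | 0, c => [c]
  | j + 1, c => chain (kary k j) (k ^ j) (k - 1) c

section Kary

variable {k : ℕ}

lemma computesBlock_kary (hk : 0 < k) (j c : ℕ) :
    ComputesBlock (kary k j c) c (k ^ j) (1 + (k - 1) * j) := by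
  induction j generalizing c with
  | zero => simpa [kary] using computesBlock_singleton c
  | succ j ih =>
    have h := computesBlock_chain ih (by positivity) (k - 1) c
    rwa [Nat.sub_add_cancel hk, ← pow_succ', add_assoc, ← Nat.mul_succ] at h

lemma length_kary (hk : 0 < k) (j c : ℕ) : (kary k j c).length = (2 * k - 1) ^ j := by
  induction j generalizing c with
  | zero => rfl
  | succ j ih =>
    rw [kary, length_chain ih, pow_succ', show 2 * (k - 1) + 1 = 2 * k - 1 by omega]

end Kary

section OfList

variable {l : List ℕ} {S : Finset ℕ}

lemma run_take_succ {t : ℕ} (ht : t < l.length) :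
    run S (l.take (t + 1)) = toggle (run S (l.take t)) (l.getD t 0) := by
  rw [List.take_add_one, run_append, List.getElem?_eq_getElem ht, List.getD_eq_getElem _ _ ht]
  rfl

lemma Legal.canToggle_getD (h : Legal S l) {t : ℕ} (ht : t < l.length) :
    CanToggle (run S (l.take t)) (l.getD t 0) := by
  rw [← List.take_append_drop (t + 1) l, legal_append_iff, List.take_add_one, legal_append_iff,
    List.getElem?_eq_getElem ht] at h
  rw [List.getD_eq_getElem _ _ ht]
  simpa using h.1.2.1

lemma card_run_take_le_maxCard (t : ℕ) : (run S (l.take t)).card ≤ maxCard S l :=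
  calc (run S (l.take t)).card ≤ maxCard (run S (l.take t)) (l.drop t) := card_le_maxCard _ _
    _ ≤ maxCard S l := by
      conv_rhs => rw [← List.take_append_drop t l, maxCard_append]
      exact le_max_right _ _

def toMoveSeq (l : List ℕ) (hl : Legal ∅ l) : MoveSeq where
  T := l.length
  conf t := run ∅ (l.take t)
  move t := l.getD t 0
  init := rfl
  legal _ ht := hl.canToggle_getD ht
  step _ ht := run_take_succ ht

lemma toMoveSeq_conf_T (hl : Legal ∅ l) : (toMoveSeq l hl).conf (toMoveSeq l hl).T = run ∅ l :=
  congrArg (run ∅) l.take_length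

lemma space_toMoveSeq_le (hl : Legal ∅ l) : (toMoveSeq l hl).space ≤ maxCard ∅ l :=
  Finset.sup_le fun t _ => card_run_take_le_maxCard t

end OfList

end Pebbling

/-- the `k`-ary recursion strategy cleanly computes `k^j - 1`
with space at most `1 + (k-1)·j` and move count at most `(2k - 1)^j`. -/
theorem kary_recursion_cost (k j : ℕ) (hk : 2 ≤ k) :
    ∃ M : MoveSeq, M.CleanlyComputes (k ^ j - 1) ∧
      M.space ≤ 1 + (k - 1) * j ∧ M.T ≤ (2 * k - 1) ^ j := by
  have hk₀ : 0 < k := by omega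
  obtain ⟨hlegal, hrun, hspace⟩ :=
    Pebbling.computesBlock_kary hk₀ j 0 ∅ ⟨Or.inl rfl, Finset.disjoint_empty_left _⟩
  refine ⟨Pebbling.toMoveSeq (Pebbling.kary k j 0) hlegal, ?_, ?_,
    (Pebbling.length_kary hk₀ j 0).le⟩
  · rw [MoveSeq.CleanlyComputes, Pebbling.toMoveSeq_conf_T, hrun, zero_add, insert_empty_eq]
  · simpa using (Pebbling.space_toMoveSeq_le hlegal).trans hspace
end

section
/- Suppose there exists a move sequence that cleanly computes x₀ with space at most n₀ and total move count t₀. Then for all k ≥ 2 and j ≥ 0 there exists a move sequence that cleanly computes m := k^j·(x₀ + 1) − 1 with space at most n₀ + (k−1)·j and total move count at most t₀·(2k − 1)^j. -/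
namespace Pebble

def toggle (S : Finset ℕ) (i : ℕ) : Finset ℕ := if i ∈ S then S.erase i else insert i S

def runL : Finset ℕ → List ℕ → Finset ℕ
  | S, [] => S
  | S, i :: l => runL (toggle S i) l

def OkL : Finset ℕ → List ℕ → Prop
  | _, [] => True
  | S, i :: l => (i = 0 ∨ 1 ≤ i ∧ i - 1 ∈ S) ∧ OkL (toggle S i) l

def spc : Finset ℕ → List ℕ → ℕ
  | S, [] => S.card
  | S, i :: l => max S.card (spc (toggle S i) l)

@[simp] lemma runL_nil (S : Finset ℕ) : runL S [] = S := rfl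
@[simp] lemma runL_cons (S : Finset ℕ) (i : ℕ) (l : List ℕ) :
    runL S (i :: l) = runL (toggle S i) l := rfl
@[simp] lemma OkL_nil (S : Finset ℕ) : OkL S [] := trivial
@[simp] lemma OkL_cons (S : Finset ℕ) (i : ℕ) (l : List ℕ) :
    OkL S (i :: l) ↔ (i = 0 ∨ 1 ≤ i ∧ i - 1 ∈ S) ∧ OkL (toggle S i) l := Iff.rfl
@[simp] lemma spc_nil (S : Finset ℕ) : spc S [] = S.card := rfl
@[simp] lemma spc_cons (S : Finset ℕ) (i : ℕ) (l : List ℕ) :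
    spc S (i :: l) = max S.card (spc (toggle S i) l) := rfl

lemma toggle_toggle (S : Finset ℕ) (i : ℕ) : toggle (toggle S i) i = S := by
  by_cases h : i ∈ S
  · simp [toggle, h]
  · simp [toggle, h]

lemma mem_toggle_ne {S : Finset ℕ} {i x : ℕ} (h : x ≠ i) : x ∈ toggle S i ↔ x ∈ S := by
  unfold toggle; split <;> simp [h]

lemma runL_append (S : Finset ℕ) (l₁ l₂ : List ℕ) :
    runL S (l₁ ++ l₂) = runL (runL S l₁) l₂ := by
  induction l₁ generalizing S with
  | nil => rfl
  | cons i l ih => simp [ih]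

lemma OkL_append (S : Finset ℕ) (l₁ l₂ : List ℕ) :
    OkL S (l₁ ++ l₂) ↔ OkL S l₁ ∧ OkL (runL S l₁) l₂ := by
  induction l₁ generalizing S with
  | nil => simp
  | cons i l ih => simp [ih]; tauto

lemma card_le_spc (S : Finset ℕ) (l : List ℕ) : S.card ≤ spc S l := by
  cases l <;> simp

lemma runL_card_le_spc (S : Finset ℕ) (l : List ℕ) : (runL S l).card ≤ spc S l := by
  induction l generalizing S with
  | nil => simp
  | cons i l ih => simpa using le_trans (ih (toggle S i)) (le_max_right _ _)

lemma spc_append (S : Finset ℕ) (l₁ l₂ : List ℕ) :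
    spc S (l₁ ++ l₂) = max (spc S l₁) (spc (runL S l₁) l₂) := by
  induction l₁ generalizing S with
  | nil =>
    simp only [List.nil_append, spc_nil, runL_nil]
    exact (Nat.max_eq_right (card_le_spc S l₂)).symm
  | cons i l ih =>
    simp only [List.cons_append, spc_cons, runL_cons, ih, Nat.max_assoc]

lemma reverse_ok (l : List ℕ) (S : Finset ℕ) (h : OkL S l) :
    OkL (runL S l) l.reverse ∧ runL (runL S l) l.reverse = S ∧
      spc (runL S l) l.reverse = spc S l := by
  induction l generalizing S with
  | nil => simp
  | cons i l ih =>
    obtain ⟨hleg, hok⟩ := h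
    obtain ⟨ih1, ih2, ih3⟩ := ih (toggle S i) hok
    have hrun : runL S (i :: l) = runL (toggle S i) l := rfl
    constructor
    · rw [List.reverse_cons, OkL_append, hrun]
      refine ⟨ih1, ?_, trivial⟩
      rw [ih2]
      rcases hleg with h0 | ⟨h1, h2⟩
      · exact Or.inl h0
      · exact Or.inr ⟨h1, (mem_toggle_ne (by omega)).2 h2⟩
    constructor
    · rw [List.reverse_cons, runL_append, hrun, ih2]
      simp [toggle_toggle]
    · rw [List.reverse_cons, spc_append, hrun, ih2, ih3]
      have h1 : spc (toggle S i) [i] = max (toggle S i).card S.card := by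
        simp [toggle_toggle]
      rw [h1]
      have h2 := card_le_spc (toggle S i) l
      simp only [spc_cons, Nat.max_def]
      split_ifs <;> omega



lemma toggle_filter_le {S : Finset ℕ} {m i : ℕ} (hi : i ≤ m) :
    (toggle S i).filter (· ≤ m) = toggle (S.filter (· ≤ m)) i := by
  by_cases h : i ∈ S
  · have h' : i ∈ S.filter (· ≤ m) := Finset.mem_filter.2 ⟨h, hi⟩
    simp only [toggle, if_pos h, if_pos h']
    ext x
    simp only [Finset.mem_filter, Finset.mem_erase]
    tauto
  · have h' : i ∉ S.filter (· ≤ m) := fun hc => h (Finset.mem_filter.1 hc).1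
    simp only [toggle, if_neg h, if_neg h']
    ext x
    simp only [Finset.mem_filter, Finset.mem_insert]
    by_cases hx : x = i
    · subst hx; simp [hi]
    · tauto

lemma toggle_filter_gt {S : Finset ℕ} {m i : ℕ} (hi : ¬ i ≤ m) :
    (toggle S i).filter (· ≤ m) = S.filter (· ≤ m) := by
  ext x
  by_cases hx : x = i
  · subst hx; simp [hi]
  · simp only [Finset.mem_filter, mem_toggle_ne hx]

lemma filter_ok (m : ℕ) (l : List ℕ) (S : Finset ℕ) (h : OkL S l) :
    OkL (S.filter (· ≤ m)) (l.filter (· ≤ m)) ∧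
      runL (S.filter (· ≤ m)) (l.filter (· ≤ m)) = (runL S l).filter (· ≤ m) ∧
      spc (S.filter (· ≤ m)) (l.filter (· ≤ m)) ≤ spc S l := by
  induction l generalizing S with
  | nil => simpa using Finset.card_filter_le S _
  | cons i l ih =>
    obtain ⟨hleg, hok⟩ := h
    obtain ⟨ih1, ih2, ih3⟩ := ih (toggle S i) hok
    by_cases hi : i ≤ m
    · have hfil : (i :: l).filter (· ≤ m) = i :: l.filter (· ≤ m) := by
        simp [List.filter_cons, hi]
      rw [hfil]
      rw [toggle_filter_le hi] at ih1 ih2 ih3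
      refine ⟨⟨?_, ih1⟩, ih2, ?_⟩
      · rcases hleg with h0 | ⟨h1, h2⟩
        · exact Or.inl h0
        · exact Or.inr ⟨h1, Finset.mem_filter.2 ⟨h2, by omega⟩⟩
      · simp only [spc_cons]
        have hc := Finset.card_filter_le S (· ≤ m)
        simp only [Nat.max_def]; split_ifs <;> omega
    · have hfil : (i :: l).filter (· ≤ m) = l.filter (· ≤ m) := by
        simp [List.filter_cons, hi]
      rw [hfil]
      rw [toggle_filter_gt hi] at ih1 ih2 ih3
      refine ⟨ih1, ih2, ?_⟩
      simp only [spc_cons]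
      exact le_trans ih3 (le_max_right _ _)

lemma toggle_shift {E A : Finset ℕ} {s m i : ℕ} (hi : i ≤ m)
    (hE : ∀ e ∈ E, e < s ∨ s + m < e) :
    toggle (E ∪ A.image (· + s)) (i + s) = E ∪ (toggle A i).image (· + s) := by
  have hmem : (i + s ∈ E ∪ A.image (· + s)) ↔ i ∈ A := by
    simp only [Finset.mem_union, Finset.mem_image]
    constructor
    · rintro (h | ⟨a, ha, hq⟩)
      · rcases hE _ h with h' | h' <;> omega
      · have : a = i := by omega
        subst this; exact ha
    · intro h; exact Or.inr ⟨i, h, rfl⟩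
  by_cases h : i ∈ A
  · rw [toggle, if_pos (hmem.2 h), toggle, if_pos h]
    ext x
    simp only [Finset.mem_erase, Finset.mem_union, Finset.mem_image]
    constructor
    · rintro ⟨hx, hE' | ⟨a, ha, rfl⟩⟩
      · exact Or.inl hE'
      · exact Or.inr ⟨a, ⟨by omega, ha⟩, rfl⟩
    · rintro (hE' | ⟨a, ⟨hne, ha⟩, rfl⟩)
      · refine ⟨?_, Or.inl hE'⟩
        rintro rfl
        rcases hE _ hE' with h' | h' <;> omega
      · exact ⟨by omega, Or.inr ⟨a, ha, rfl⟩⟩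
  · rw [toggle, if_neg fun hc => h (hmem.1 hc), toggle, if_neg h]
    ext x
    simp only [Finset.mem_insert, Finset.mem_union, Finset.mem_image]
    constructor
    · rintro (rfl | hE' | ⟨a, ha, rfl⟩)
      · exact Or.inr ⟨i, Or.inl rfl, rfl⟩
      · exact Or.inl hE'
      · exact Or.inr ⟨a, Or.inr ha, rfl⟩
    · rintro (hE' | ⟨a, rfl | ha, rfl⟩)
      · exact Or.inr (Or.inl hE')
      · exact Or.inl rfl
      · exact Or.inr (Or.inr ⟨a, ha, rfl⟩)

lemma card_union_shift {E A : Finset ℕ} {s m : ℕ} (hA : ∀ a ∈ A, a ≤ m)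
    (hE : ∀ e ∈ E, e < s ∨ s + m < e) :
    (E ∪ A.image (· + s)).card = E.card + A.card := by
  rw [Finset.card_union_of_disjoint, Finset.card_image_of_injective _ (fun a b h => by omega)]
  rw [Finset.disjoint_left]
  rintro e he hc
  obtain ⟨a, ha, rfl⟩ := Finset.mem_image.1 hc
  have := hA a ha
  rcases hE _ he with h' | h' <;> omega

lemma toggle_bdd {A : Finset ℕ} {m i : ℕ} (hi : i ≤ m) (hA : ∀ a ∈ A, a ≤ m) :
    ∀ a ∈ toggle A i, a ≤ m := by
  intro a ha
  by_cases hx : a = i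
  · omega
  · exact hA a ((mem_toggle_ne hx).1 ha)

lemma shift_ok {E : Finset ℕ} {s m : ℕ}
    (hE : ∀ e ∈ E, e < s ∨ s + m < e) (hs : s = 0 ∨ s - 1 ∈ E)
    (l : List ℕ) (A : Finset ℕ) (hl : ∀ i ∈ l, i ≤ m) (hA : ∀ a ∈ A, a ≤ m)
    (hok : OkL A l) :
    OkL (E ∪ A.image (· + s)) (l.map (· + s)) ∧
      runL (E ∪ A.image (· + s)) (l.map (· + s)) = E ∪ (runL A l).image (· + s) ∧
      spc (E ∪ A.image (· + s)) (l.map (· + s)) = E.card + spc A l := by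
  induction l generalizing A with
  | nil => simpa using card_union_shift hA hE
  | cons i l ih =>
    obtain ⟨hleg, hok'⟩ := hok
    have hi : i ≤ m := hl i List.mem_cons_self
    have hl' : ∀ x ∈ l, x ≤ m := fun x hx => hl x (List.mem_cons_of_mem i hx)
    obtain ⟨ih1, ih2, ih3⟩ := ih (toggle A i) hl' (toggle_bdd hi hA) hok'
    rw [← toggle_shift hi hE] at ih1 ih2 ih3
    simp only [List.map_cons, OkL_cons, runL_cons, spc_cons]
    refine ⟨⟨?_, ih1⟩, ih2, ?_⟩
    · rcases hleg with h0 | ⟨h1, h2⟩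
      · subst h0
        rcases hs with rfl | hsE
        · exact Or.inl rfl
        · refine Or.inr ⟨?_, ?_⟩
          · rcases hE _ hsE with h' | h' <;> omega
          · have : 0 + s - 1 = s - 1 := by omega
            rw [this]
            exact Finset.mem_union_left _ hsE
      · refine Or.inr ⟨by omega, ?_⟩
        have : i + s - 1 = (i - 1) + s := by omega
        rw [this]
        exact Finset.mem_union_right _ (Finset.mem_image.2 ⟨i - 1, h2, rfl⟩)
    · rw [ih3, card_union_shift hA hE]
      have := card_le_spc (toggle A i) l
      simp only [Nat.max_def]; split_ifs <;> omega


lemma exists_list (M : MoveSeq) : ∀ p ≤ M.T, ∃ l : List ℕ,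
    OkL ∅ l ∧ runL ∅ l = M.conf p ∧ spc ∅ l ≤ M.space ∧ l.length = p := by
  intro p
  induction p with
  | zero =>
    intro _
    exact ⟨[], trivial, by simp [M.init], by simpa using M.init ▸ le_refl 0, rfl⟩
  | succ p ih =>
    intro hp
    obtain ⟨l, h1, h2, h3, h4⟩ := ih (by omega)
    have hlt : p < M.T := hp
    refine ⟨l ++ [M.move p], ?_, ?_, ?_, by simp [h4]⟩
    · rw [OkL_append, h2]
      exact ⟨h1, M.legal p hlt, trivial⟩
    · rw [runL_append, h2]
      simp only [runL_cons, runL_nil, toggle]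
      exact (M.step p hlt).symm
    · rw [spc_append, h2]
      have hc : ∀ t ≤ M.T, (M.conf t).card ≤ M.space := fun t ht =>
        Finset.le_sup (f := fun t => (M.conf t).card)
          (Finset.mem_range.2 (Nat.lt_succ_of_le ht))
      refine max_le h3 ?_
      simp only [spc_cons, spc_nil, toggle]
      rw [← M.step p hlt]
      exact max_le (hc p (by omega)) (hc (p + 1) hp)

lemma okL_getD {l : List ℕ} : ∀ {S : Finset ℕ}, OkL S l → ∀ t < l.length,
    l.getD t 0 = 0 ∨ 1 ≤ l.getD t 0 ∧ l.getD t 0 - 1 ∈ runL S (l.take t) := by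
  induction l with
  | nil => intro S _ t ht; simp at ht
  | cons i l ih =>
    intro S h t ht
    obtain ⟨hleg, hok⟩ := h
    cases t with
    | zero => simpa using hleg
    | succ t => simpa using ih hok t (by simpa using ht)

lemma runL_take_card_le {l : List ℕ} : ∀ (S : Finset ℕ) (t : ℕ),
    (runL S (l.take t)).card ≤ spc S l := by
  induction l with
  | nil => intro S t; simp
  | cons i l ih =>
    intro S t
    cases t with
    | zero => simpa using card_le_spc S (i :: l)
    | succ t => simpa using le_trans (ih (toggle S i) t) (le_max_right _ _)

def ofList (l : List ℕ) (hok : OkL ∅ l) : MoveSeq where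
  T := l.length
  conf t := runL ∅ (l.take t)
  move t := l.getD t 0
  init := by simp
  legal := fun t ht => okL_getD hok t ht
  step := by
    intro t ht
    have htake : l.take (t + 1) = l.take t ++ [l.getD t 0] := by
      rw [List.take_succ]
      congr 1
      rw [List.getElem?_eq_getElem ht]
      simp [List.getD_eq_getElem?_getD, List.getElem?_eq_getElem ht]
    show runL ∅ (List.take (t + 1) l) = if l.getD t 0 ∈ runL ∅ (List.take t l) then
        (runL ∅ (List.take t l)).erase (l.getD t 0)
      else insert (l.getD t 0) (runL ∅ (List.take t l))
    rw [htake, runL_append]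
    simp only [runL_cons, runL_nil, toggle]

lemma ofList_space (l : List ℕ) (hok : OkL ∅ l) : (ofList l hok).space ≤ spc ∅ l := by
  refine Finset.sup_le fun t _ => ?_
  exact runL_take_card_le ∅ t

lemma ofList_final (l : List ℕ) (hok : OkL ∅ l) :
    (ofList l hok).conf (ofList l hok).T = runL ∅ l := by
  simp [ofList]

lemma step_lemma (m n τ k : ℕ) (hk : 2 ≤ k) (l : List ℕ)
    (hok : OkL ∅ l) (hrun : runL ∅ l = {m}) (hbd : ∀ i ∈ l, i ≤ m)
    (hspc : spc ∅ l ≤ n) (hlen : l.length ≤ τ) :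
    ∃ L : List ℕ, OkL ∅ L ∧ runL ∅ L = {k * (m + 1) - 1} ∧
      (∀ i ∈ L, i ≤ k * (m + 1) - 1) ∧ spc ∅ L ≤ n + (k - 1) ∧
      L.length ≤ (2 * k - 1) * τ := by
  have hn1 : 1 ≤ n := by
    have h := runL_card_le_spc ∅ l
    rw [hrun] at h
    simp only [Finset.card_singleton] at h
    omega
  set top : ℕ → ℕ := fun i => i * (m + 1) + m with htop
  have top_le : ∀ {a b : ℕ}, a ≤ b → top a ≤ top b := by
    intro a b hab
    have := Nat.mul_le_mul_right (m + 1) hab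
    simp only [htop]
    omega
  have top_lt_s : ∀ {a i : ℕ}, a < i → top a < i * (m + 1) := by
    intro a i hai
    have h1 : (a + 1) * (m + 1) ≤ i * (m + 1) := Nat.mul_le_mul_right (m + 1) hai
    have h2 : (a + 1) * (m + 1) = a * (m + 1) + (m + 1) := by rw [Nat.succ_mul]
    simp only [htop]
    omega
  have top_inj : Function.Injective top := by
    intro a b h
    rcases lt_trichotomy a b with hc | hc | hc
    · have h2 : a * (m + 1) + m < b * (m + 1) := top_lt_s hc
      simp only [htop] at h
      omega
    · exact hc
    · have h2 : b * (m + 1) + m < a * (m + 1) := top_lt_s hc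
      simp only [htop] at h
      omega
  have hcopy : ∀ (i : ℕ) (I : Finset ℕ), i ∉ I → (i = 0 ∨ (1 ≤ i ∧ i - 1 ∈ I)) →
      OkL (I.image top) (l.map (· + i * (m + 1))) ∧
      runL (I.image top) (l.map (· + i * (m + 1))) = (insert i I).image top ∧
      spc (I.image top) (l.map (· + i * (m + 1))) = I.card + spc ∅ l := by
    intro i I hiI hleg
    have hE : ∀ e ∈ I.image top, e < i * (m + 1) ∨ i * (m + 1) + m < e := by
      intro e he
      obtain ⟨a, haI, rfl⟩ := Finset.mem_image.1 he
      rcases lt_trichotomy a i with h | h | h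
      · exact Or.inl (top_lt_s h)
      · exact absurd (h ▸ haI) hiI
      · right
        have h1 : (i + 1) * (m + 1) ≤ a * (m + 1) := Nat.mul_le_mul_right (m + 1) h
        have h2 : (i + 1) * (m + 1) = i * (m + 1) + (m + 1) := by rw [Nat.succ_mul]
        simp only [htop]
        omega
    have hs : i * (m + 1) = 0 ∨ i * (m + 1) - 1 ∈ I.image top := by
      rcases hleg with rfl | ⟨h1, h2⟩
      · exact Or.inl (by simp)
      · right
        refine Finset.mem_image.2 ⟨i - 1, h2, ?_⟩
        obtain ⟨i', rfl⟩ : ∃ i', i = i' + 1 := ⟨i - 1, by omega⟩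
        have h3 : (i' + 1) * (m + 1) = i' * (m + 1) + (m + 1) := by rw [Nat.succ_mul]
        simp only [htop, Nat.add_sub_cancel]
        omega
    obtain ⟨h1, h2, h3⟩ := shift_ok hE hs l ∅ hbd (by simp) hok
    simp only [Finset.image_empty, Finset.union_empty, hrun] at h1 h2 h3
    refine ⟨h1, ?_, ?_⟩
    · have him : Finset.image (· + i * (m + 1)) {m} = {top i} := by
        simp [htop, Nat.add_comm]
      rw [h2, him, Finset.image_insert, Finset.insert_eq, Finset.union_comm]
    · rw [h3]
      congr 1
      exact Finset.card_image_of_injective _ top_inj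
  have forward : ∀ i : ℕ, ∃ F : List ℕ, OkL ∅ F ∧
      runL ∅ F = (Finset.range i).image top ∧ spc ∅ F ≤ n + (i - 1) ∧
      F.length = i * l.length ∧ ∀ x ∈ F, ∃ a < i, x ≤ top a := by
    intro i
    induction i with
    | zero => exact ⟨[], trivial, by simp, by simp, by simp, by simp⟩
    | succ i ih =>
      obtain ⟨F, hF1, hF2, hF3, hF4, hF5⟩ := ih
      obtain ⟨hc1, hc2, hc3⟩ := hcopy i (Finset.range i) (by simp)
        (by rcases Nat.eq_zero_or_pos i with h | h
            · exact Or.inl h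
            · exact Or.inr ⟨h, Finset.mem_range.2 (by omega)⟩)
      refine ⟨F ++ l.map (· + i * (m + 1)), ?_, ?_, ?_, ?_, ?_⟩
      · rw [OkL_append, hF2]
        exact ⟨hF1, hc1⟩
      · rw [runL_append, hF2, hc2, Finset.range_add_one]
      · rw [spc_append, hF2, hc3, Finset.card_range]
        refine max_le (le_trans hF3 (by omega)) (by omega)
      · simp only [List.length_append, hF4, List.length_map, Nat.succ_mul]
      · intro x hx
        rcases List.mem_append.1 hx with h | h
        · obtain ⟨a, ha, hb⟩ := hF5 x h
          exact ⟨a, by omega, hb⟩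
        · obtain ⟨e, he, rfl⟩ := List.mem_map.1 h
          have := hbd e he
          exact ⟨i, by omega, by simp only [htop]; omega⟩
  have backward : ∀ d, d ≤ k - 1 → ∃ B : List ℕ,
      OkL ((Finset.range k).image top) B ∧
      runL ((Finset.range k).image top) B
        = insert (top (k - 1)) ((Finset.range (k - 1 - d)).image top) ∧
      spc ((Finset.range k).image top) B ≤ n + (k - 1) ∧
      B.length = d * l.length ∧ ∀ x ∈ B, ∃ a < k, x ≤ top a := by
    intro d
    induction d with
    | zero =>
      intro _
      refine ⟨[], trivial, ?_, ?_, by simp, by simp⟩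
      · have hrk : Finset.range k = insert (k - 1) (Finset.range (k - 1)) := by
          conv_lhs => rw [show k = (k - 1) + 1 by omega, Finset.range_add_one]
        rw [runL_nil, Nat.sub_zero, hrk, Finset.image_insert]
      · rw [spc_nil, Finset.card_image_of_injective _ top_inj, Finset.card_range]
        omega
    | succ d ih =>
      intro hd
      obtain ⟨B, hB1, hB2, hB3, hB4, hB5⟩ := ih (by omega)
      set i := k - 2 - d with hidef
      have hii : k - 1 - d = i + 1 := by omega
      have hii' : k - 1 - (d + 1) = i := by omega
      obtain ⟨hc1, hc2, hc3⟩ := hcopy i (insert (k - 1) (Finset.range i))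
        (by simp only [Finset.mem_insert, Finset.mem_range]; omega)
        (by rcases Nat.eq_zero_or_pos i with h | h
            · exact Or.inl h
            · refine Or.inr ⟨h, ?_⟩
              simp only [Finset.mem_insert, Finset.mem_range]
              omega)
      have hstate : (insert i (insert (k - 1) (Finset.range i))).image top
          = insert (top (k - 1)) ((Finset.range (i + 1)).image top) := by
        rw [Finset.insert_comm, ← Finset.range_add_one, Finset.image_insert]
      obtain ⟨hr1, hr2, hr3⟩ := reverse_ok _ _ hc1
      rw [hc2, hstate] at hr1 hr2 hr3
      refine ⟨B ++ (l.map (· + i * (m + 1))).reverse, ?_, ?_, ?_, ?_, ?_⟩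
      · rw [OkL_append, hB2, hii]
        exact ⟨hB1, hr1⟩
      · rw [runL_append, hB2, hii, hr2, hii', Finset.image_insert]
      · rw [spc_append, hB2]
        refine max_le hB3 ?_
        rw [hii, hr3, hc3, Finset.card_insert_of_notMem
          (by simp only [Finset.mem_range]; omega), Finset.card_range]
        omega
      · simp only [List.length_append, hB4, List.length_reverse, List.length_map, Nat.succ_mul]
      · intro x hx
        rcases List.mem_append.1 hx with h | h
        · exact hB5 x h
        · rw [List.mem_reverse] at h
          obtain ⟨e, he, rfl⟩ := List.mem_map.1 h
          have := hbd e he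
          exact ⟨i, by omega, by simp only [htop]; omega⟩
  obtain ⟨F, hF1, hF2, hF3, hF4, hF5⟩ := forward k
  obtain ⟨B, hB1, hB2, hB3, hB4, hB5⟩ := backward (k - 1) le_rfl
  have htopk : top (k - 1) = k * (m + 1) - 1 := by
    obtain ⟨k', rfl⟩ : ∃ k', k = k' + 1 := ⟨k - 1, by omega⟩
    have h3 : (k' + 1) * (m + 1) = k' * (m + 1) + (m + 1) := by rw [Nat.succ_mul]
    simp only [htop, Nat.add_sub_cancel]
    omega
  refine ⟨F ++ B, ?_, ?_, ?_, ?_, ?_⟩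
  · rw [OkL_append, hF2]
    exact ⟨hF1, hB1⟩
  · rw [runL_append, hF2, hB2, htopk]
    simp
  · intro x hx
    have hb : ∃ a < k, x ≤ top a := by
      rcases List.mem_append.1 hx with h | h
      · exact hF5 x h
      · exact hB5 x h
    obtain ⟨a, ha, hb⟩ := hb
    calc x ≤ top a := hb
      _ ≤ top (k - 1) := top_le (by omega)
      _ = k * (m + 1) - 1 := htopk
  · rw [spc_append, hF2]
    exact max_le (le_trans hF3 (by omega)) hB3
  · rw [List.length_append, hF4, hB4]
    have h1 : k * l.length + (k - 1) * l.length = (2 * k - 1) * l.length := by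
      rw [← Nat.add_mul]
      congr 1
      omega
    rw [h1]
    exact Nat.mul_le_mul_left _ hlen

theorem kary_recursion_from_base' (x₀ n₀ t₀ : ℕ)
    (hbase : ∃ M₀ : MoveSeq, M₀.CleanlyComputes x₀ ∧ M₀.space ≤ n₀ ∧ M₀.T = t₀)
    (k j : ℕ) (hk : 2 ≤ k) :
    ∃ M : MoveSeq, M.CleanlyComputes (k ^ j * (x₀ + 1) - 1) ∧
      M.space ≤ n₀ + (k - 1) * j ∧ M.T ≤ t₀ * (2 * k - 1) ^ j := by
  obtain ⟨M₀, hclean, hspace, hT⟩ := hbase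
  obtain ⟨l, hl1, hl2, hl3, hl4⟩ := exists_list M₀ M₀.T le_rfl
  rw [MoveSeq.CleanlyComputes] at hclean
  rw [hclean] at hl2
  obtain ⟨hf1, hf2, hf3⟩ := filter_ok x₀ l ∅ hl1
  rw [Finset.filter_empty] at hf1 hf2 hf3
  rw [hl2] at hf2
  have hf2' : runL ∅ (l.filter (· ≤ x₀)) = {x₀} := by
    rw [hf2, Finset.filter_singleton, if_pos (le_refl x₀)]
  have hbd : ∀ i ∈ l.filter (· ≤ x₀), i ≤ x₀ := by
    intro i hi
    have := List.of_mem_filter hi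
    simpa using this
  have main : ∀ j : ℕ, ∃ L : List ℕ, OkL ∅ L ∧
      runL ∅ L = {k ^ j * (x₀ + 1) - 1} ∧
      (∀ i ∈ L, i ≤ k ^ j * (x₀ + 1) - 1) ∧
      spc ∅ L ≤ n₀ + (k - 1) * j ∧ L.length ≤ t₀ * (2 * k - 1) ^ j := by
    intro j
    induction j with
    | zero =>
      refine ⟨l.filter (· ≤ x₀), hf1, ?_, ?_, ?_, ?_⟩
      · rw [hf2']
        congr 1
        simp
      · simpa using hbd
      · simpa using le_trans hf3 (le_trans hl3 hspace)
      · have h := List.length_filter_le (· ≤ x₀) l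
        simp only [pow_zero, mul_one]
        omega
    | succ j ih =>
      obtain ⟨L, h1, h2, h3, h4, h5⟩ := ih
      have hm1 : k ^ j * (x₀ + 1) - 1 + 1 = k ^ j * (x₀ + 1) := by
        have h : 1 ≤ k ^ j * (x₀ + 1) := Nat.one_le_iff_ne_zero.2 (by positivity)
        omega
      obtain ⟨L', g1, g2, g3, g4, g5⟩ := step_lemma _ _ _ k hk L h1 h2 h3 h4 h5
      rw [hm1] at g2 g3
      have hmm : k * (k ^ j * (x₀ + 1)) = k ^ (j + 1) * (x₀ + 1) := by ring
      rw [hmm] at g2 g3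
      refine ⟨L', g1, g2, g3, ?_, ?_⟩
      · refine le_trans g4 ?_
        rw [Nat.mul_succ]
        omega
      · refine le_trans g5 ?_
        rw [pow_succ]
        set a := 2 * k - 1
        exact le_of_eq (by ring)
  obtain ⟨L, h1, h2, _, h4, h5⟩ := main j
  refine ⟨ofList L h1, ?_, ?_, ?_⟩
  · rw [MoveSeq.CleanlyComputes, ofList_final]
    exact h2
  · exact le_trans (ofList_space L h1) h4
  · exact h5

end Pebble

/-- `k`-ary recursion from a base unit `(x₀, n₀, t₀)`. -/
theorem kary_recursion_from_base (x₀ n₀ t₀ : ℕ)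
    (hbase : ∃ M₀ : MoveSeq, M₀.CleanlyComputes x₀ ∧ M₀.space ≤ n₀ ∧ M₀.T = t₀)
    (k j : ℕ) (hk : 2 ≤ k) :
    ∃ M : MoveSeq, M.CleanlyComputes (k ^ j * (x₀ + 1) - 1) ∧
      M.space ≤ n₀ + (k - 1) * j ∧ M.T ≤ t₀ * (2 * k - 1) ^ j := by
  exact Pebble.kary_recursion_from_base' x₀ n₀ t₀ hbase k j hk
end

section
/- Every move sequence that cleanly computes m ≥ 1 contains at least 2m − 1 squaring operations; hence the direct strategy, which uses exactly 2m − 1 squaring operations, is time-optimal. -/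
/-!
A node is pebbled at time `t` exactly when it has been toggled an odd number of times before `t`.
The first toggle of a node `i + 1` needs `i` to be pebbled, so `i` has been toggled before; hence
every node `1, …, m` is toggled at least once. The nodes `1, …, m - 1` end unpebbled, so each of
them is toggled an even, hence at least two, number of times, and `m` at least once.
-/

open Finset

namespace MoveSeq

variable (M : MoveSeq)

def toggles (i t : ℕ) : ℕ :=
  #{s ∈ range t | M.move s = i}

lemma toggles_succ (i t : ℕ) :
    M.toggles i (t + 1) = M.toggles i t + if M.move t = i then 1 else 0 := by
  simp only [toggles, card_filter, sum_range_succ]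

lemma toggles_mono (i : ℕ) : Monotone (M.toggles i) := fun _ _ h =>
  card_le_card (filter_subset_filter _ (range_subset_range.mpr h))

lemma conf_succ {t : ℕ} (ht : t < M.T) : M.conf (t + 1) = symmDiff (M.conf t) {M.move t} := by
  ext i
  rw [M.step t ht, mem_symmDiff, mem_singleton]
  split_ifs with h <;> grind

lemma mem_conf_iff_odd_toggles (i : ℕ) {t : ℕ} (ht : t ≤ M.T) :
    i ∈ M.conf t ↔ Odd (M.toggles i t) := by
  induction t with
  | zero => simp [toggles, M.init]
  | succ t ih =>
    rw [M.conf_succ ht, mem_symmDiff, mem_singleton, toggles_succ]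
    rcases eq_or_ne (M.move t) i with rfl | h
    · simp [Nat.odd_add_one, ← ih (by omega)]
    · simp [← ih (by omega), h, h.symm]

lemma toggles_pos_of_mem {i s : ℕ} (hs : s ≤ M.T) (hi : i ∈ M.conf s) : 0 < M.toggles i M.T :=
  ((M.mem_conf_iff_odd_toggles i hs).mp hi).pos.trans_le (M.toggles_mono i hs)

lemma toggles_pos_of_toggles_succ_pos {i : ℕ} (h : 0 < M.toggles (i + 1) M.T) :
    0 < M.toggles i M.T := by
  obtain ⟨s, hs⟩ := card_pos.mp h
  rw [mem_filter, mem_range] at hs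
  rcases M.legal s hs.1 with h0 | ⟨-, hpred⟩
  · omega
  · rw [hs.2, Nat.add_sub_cancel] at hpred
    exact M.toggles_pos_of_mem hs.1.le hpred

lemma toggles_pos_of_le {i m : ℕ} (h : 0 < M.toggles m M.T) (hi : i ≤ m) :
    0 < M.toggles i M.T := by
  induction m with
  | zero => rwa [Nat.le_zero.mp hi]
  | succ m ih =>
    rcases hi.eq_or_lt with rfl | hlt
    · exact h
    · exact ih (M.toggles_pos_of_toggles_succ_pos h) (by omega)

lemma two_le_toggles {i : ℕ} (hpos : 0 < M.toggles i M.T) (hi : i ∉ M.conf M.T) :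
    2 ≤ M.toggles i M.T := by
  rw [M.mem_conf_iff_odd_toggles i le_rfl, Nat.not_odd_iff_even] at hi
  obtain ⟨k, hk⟩ := hi
  omega

lemma sum_toggles_le_squarings {S : Finset ℕ} (hS : 0 ∉ S) :
    ∑ i ∈ S, M.toggles i M.T ≤ M.squarings := by
  simp only [toggles, sum_card_fiberwise_eq_card_filter]
  refine card_le_card fun s => ?_
  simp only [mem_filter]
  exact fun ⟨hs, hmove⟩ => ⟨hs, Nat.one_le_iff_ne_zero.mpr fun h => hS (h ▸ hmove)⟩

end MoveSeq

theorem squarings_lower_bound_general (m : ℕ) (M : MoveSeq)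
    (hc : M.CleanlyComputes m) :
    2 * m - 1 ≤ M.squarings := by
  obtain _ | n := m
  · exact Nat.zero_le _
  replace hc : M.conf M.T = {n + 1} := hc
  have hfinal : 0 < M.toggles (n + 1) M.T := M.toggles_pos_of_mem le_rfl (by simp [hc])
  have hlower : ∀ i ∈ Ioc 0 n, 2 ≤ M.toggles i M.T := fun i hi =>
    M.two_le_toggles (M.toggles_pos_of_le hfinal (by grind))
      (by rw [hc, mem_singleton]; grind)
  calc 2 * (n + 1) - 1 = #(Ioc 0 n) • 2 + 1 := by rw [Nat.card_Ioc, smul_eq_mul]; omega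
    _ ≤ ∑ i ∈ Ioc 0 n, M.toggles i M.T + M.toggles (n + 1) M.T :=
      add_le_add (card_nsmul_le_sum _ _ _ hlower) hfinal
    _ = ∑ i ∈ Ioc 0 (n + 1), M.toggles i M.T := (sum_Ioc_succ_top n.zero_le _).symm
    _ ≤ M.squarings := M.sum_toggles_le_squarings (by simp)

/-- every clean computation of `m ≥ 1` contains at least
`2m - 1` squaring operations. -/
theorem squarings_lower_bound (m : ℕ) (hm : 1 ≤ m) (M : MoveSeq)
    (hc : M.CleanlyComputes m) :
    2 * m - 1 ≤ M.squarings :=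
  squarings_lower_bound_general m M hc
end
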